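/- arXiv:1512.05978 — 6 statements merged into one kernel-verified Lean document; each statement's English description precedes it below -/
import Mathlib

section
/- If the directed graph K_R associated to a separated family R of partial sequences contains a directed cycle, then the set G_R is empty. More precisely: suppose there exist partial sequences (F_1,j_1),...,(F_r,j_r) (each F_l a subset of [n], j_l : F_l → ℤ) and indices i_1 ∈ F_1 ∩ F_2, i_2 ∈ F_2 ∩ F_3, ..., i_r ∈ F_r ∩ F_1 with j_1(i_1) < j_2(i_1), j_2(i_2) < j_3(i_2), ..., j_r(i_r) < j_1(i_r). Then there is no tuple of real sequences (x_{i,1} < ... < x_{i,k_i})_{i=1}^n satisfying x_{i, j_l(i)} = x_{i', j_l(i')} for all l and all i, i' ∈ F_l. -/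
/-! Along the cycle, the common values `v l = x_{i, j_l(i)}` (any `i ∈ F_l`) strictly increase:
`v l = x_{i_l, j_l(i_l)} < x_{i_l, j_{l+1}(i_l)} = v (l + 1)` by monotonicity of the sequence `x_{i_l}`.
A function cannot strictly increase along every step of a map of a finite set into itself:
look at a point where it is maximal. -/

theorem Finite.not_forall_lt_comp {ι β : Type*} [Finite ι] [Nonempty ι] [LinearOrder β]
    (s : ι → ι) (v : ι → β) : ¬ ∀ l, v l < v (s l) := by
  intro hlt
  obtain ⟨l, hl⟩ := Finite.exists_max v
  exact (hlt l).not_ge (hl (s l))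

theorem stmt0_general (n : ℕ) (k : Fin n → ℕ)
    (r' : ℕ)
    (F : Fin (r' + 1) → Finset (Fin n)) (j : Fin (r' + 1) → Fin n → ℤ)
    (hjrange : ∀ l : Fin (r' + 1), ∀ i ∈ F l, j l i ∈ Finset.Icc (1 : ℤ) (k i))
    (idx : Fin (r' + 1) → Fin n)
    (hmem : ∀ l : Fin (r' + 1), idx l ∈ F l ∩ F (l + 1))
    (hlt : ∀ l : Fin (r' + 1), j l (idx l) < j (l + 1) (idx l)) :
    ¬ ∃ x : Fin n → ℤ → ℝ,
        (∀ i, StrictMonoOn (x i) (Set.Icc (1 : ℤ) (k i))) ∧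
        (∀ i, ∀ a ∈ Set.Icc (1 : ℤ) (k i), x i a ∈ Set.Ioo (0 : ℝ) 1) ∧
        (∀ l : Fin (r' + 1), ∀ i ∈ F l, ∀ i' ∈ F l, x i (j l i) = x i' (j l i')) := by
  rintro ⟨x, hmono, -, heq⟩
  refine Finite.not_forall_lt_comp (· + 1) (fun l => x (idx l) (j l (idx l))) fun l => ?_
  obtain ⟨hcur, hnext⟩ := Finset.mem_inter.1 (hmem l)
  have hrange : ∀ m, idx l ∈ F m → j m (idx l) ∈ Set.Icc (1 : ℤ) (k (idx l)) := fun m hm => by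
    simpa only [Finset.coe_Icc] using Finset.mem_coe.2 (hjrange m (idx l) hm)
  calc x (idx l) (j l (idx l))
      < x (idx l) (j (l + 1) (idx l)) := hmono _ (hrange l hcur) (hrange _ hnext) (hlt l)
    _ = x (idx (l + 1)) (j (l + 1) (idx (l + 1))) :=
        heq _ _ hnext _ (Finset.mem_inter.1 (hmem (l + 1))).1

/-- If the directed graph `K_R` of a separated family of partial sequences contains a
directed cycle `(F_1,j_1) → ⋯ → (F_r,j_r) → (F_1,j_1)` (here of length `r = r' + 1 ≥ 1`),
witnessed by indices `i_l ∈ F_l ∩ F_{l+1}` with `j_l(i_l) < j_{l+1}(i_l)` (cyclically),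
then `G_R` is empty: there is no tuple of real sequences `0 < x_{i,1} < ⋯ < x_{i,k_i} < 1`
satisfying `x_{i,j_l(i)} = x_{i',j_l(i')}` for all `l` and all `i, i' ∈ F_l`. -/
theorem stmt0 (n : ℕ) (k : Fin n → ℕ) (hk : ∀ i, 1 ≤ k i)
    (r' : ℕ)
    (F : Fin (r' + 1) → Finset (Fin n)) (j : Fin (r' + 1) → Fin n → ℤ)
    (hjrange : ∀ l : Fin (r' + 1), ∀ i ∈ F l, j l i ∈ Finset.Icc (1 : ℤ) (k i))
    (idx : Fin (r' + 1) → Fin n)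
    (hmem : ∀ l : Fin (r' + 1), idx l ∈ F l ∩ F (l + 1))
    (hlt : ∀ l : Fin (r' + 1), j l (idx l) < j (l + 1) (idx l)) :
    ¬ ∃ x : Fin n → ℤ → ℝ,
        (∀ i, StrictMonoOn (x i) (Set.Icc (1 : ℤ) (k i))) ∧
        (∀ i, ∀ a ∈ Set.Icc (1 : ℤ) (k i), x i a ∈ Set.Ioo (0 : ℝ) 1) ∧
        (∀ l : Fin (r' + 1), ∀ i ∈ F l, ∀ i' ∈ F l, x i (j l i) = x i' (j l i')) :=
  stmt0_general n k r' F j hjrange idx hmem hlt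
end

section
/- Let G be a finite simple graph and let ã(G) denote the number of acyclic orientations of G such that within each of a given collection of disjoint cliques with prescribed linear orders, the orientation agrees with the prescribed order. If the graph T has vertex set the disjoint union over F of {F} × {1,...,m(F)} (for a finite index family and m : index → ℕ), with edges between distinct vertices (F,i), (F',i') whenever F ∩ F' ≠ ∅, and the prescribed orders are (F,i) → (F,i') for i < i' within each F, then the number of such restricted acyclic orientations equals a(T) / (∏_F m(F)!), where a(T) is the total number of acyclic orientations of T. -/
/-!
The group `∏_F Sym(m F)` acts on `T` by permuting each clique `{F} × [m F]`; adjacency only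
depends on first coordinates, so it acts by graph automorphisms, hence on acyclic orientations.
An acyclic orientation restricts to a strict linear order on each clique, and a strict linear
order on `Fin n` is the pullback of `<` along exactly one permutation. Hence `(σ, d) ↦ σ • d` is a
bijection from `∏_F Sym(m F)` times the orientations respecting the prescribed orders onto all
acyclic orientations.
-/

/-- An orientation of a simple graph `G`, encoded as the edge set `d` of a digraph. -/
def IsOrientation {V : Type*} (G : SimpleGraph V) (d : Set (V × V)) : Prop :=
  (∀ u v : V, ((u, v) ∈ d ∨ (v, u) ∈ d) ↔ G.Adj u v) ∧
    ∀ u v : V, (u, v) ∈ d → (v, u) ∉ d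

/-- An orientation is acyclic if the resulting digraph has no directed cycle. -/
def IsAcyclicOrientation {V : Type*} (G : SimpleGraph V) (d : Set (V × V)) : Prop :=
  IsOrientation G d ∧ ∀ v : V, ¬ Relation.TransGen (fun a b => (a, b) ∈ d) v v

/-- The graph `T` on vertex set `⋃_F {F} × {1,…,m(F)}` in which two distinct vertices
`(F,i)`, `(F',i')` are adjacent iff `S F ∩ S F' ≠ ∅`. -/
def graphT {ι α : Type*} [DecidableEq α] (S : ι → Finset α) (m : ι → ℕ) :
    SimpleGraph (Σ F : ι, Fin (m F)) where
  Adj u v := u ≠ v ∧ (S u.1 ∩ S v.1).Nonempty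
  symm := by
    constructor
    rintro u v ⟨h, ⟨a, ha⟩⟩
    refine ⟨h.symm, ⟨a, ?_⟩⟩
    simp only [Finset.mem_inter] at ha ⊢
    tauto
  loopless := by constructor; rintro u ⟨h, -⟩; exact h rfl

theorem existsUnique_equiv_fin_lt_iff {β : Type*} [Fintype β] {n : ℕ} (r : β → β → Prop)
    [IsStrictTotalOrder β r] (h : Fintype.card β = n) :
    ∃! e : β ≃ Fin n, ∀ a b, r a b ↔ e a < e b := by
  classical
  let := linearOrderOfSTO r
  let e₀ := (Fintype.orderIsoFinOfCardEq β h).symm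
  refine ⟨e₀.toEquiv, fun a b => (e₀.lt_iff_lt (x := a) (y := b)).symm, fun e he => ?_⟩
  let e' : β ≃o Fin n := OrderIso.ofRelIsoLT ⟨e, fun {a b} => (he a b).symm⟩
  exact congrArg RelIso.toEquiv (Subsingleton.elim e' e₀)

namespace IsAcyclicOrientation

variable {V W : Type*} {G : SimpleGraph V} {G' : SimpleGraph W}

theorem comap (e : G ↪g G') {d : Set (W × W)} (h : IsAcyclicOrientation G' d) :
    IsAcyclicOrientation G (Prod.map e e ⁻¹' d) :=
  ⟨⟨fun u v => (h.1.1 (e u) (e v)).trans e.map_adj_iff, fun u v => h.1.2 (e u) (e v)⟩,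
    fun v hv => h.2 (e v) (hv.lift e fun _ _ hab => hab)⟩

theorem isStrictTotalOrder_of_pairwise_adj {β : Type*} {d : Set (V × V)}
    (h : IsAcyclicOrientation G d) {f : β → V} (hf : Pairwise fun a b => G.Adj (f a) (f b)) :
    IsStrictTotalOrder β fun a b => (f a, f b) ∈ d := by
  have asymm a b : (f a, f b) ∈ d → (f b, f a) ∉ d := h.1.2 _ _
  have total a b (hab : a ≠ b) : (f a, f b) ∈ d ∨ (f b, f a) ∈ d := (h.1.1 _ _).2 (hf hab)
  refine
    { trichotomous := fun a b hab hba => by_contra fun hne => (total a b hne).elim hab hba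
      irrefl := fun a ha => asymm a a ha ha
      trans := fun a b c hab hbc => ?_ }
  obtain rfl | hac := eq_or_ne a c
  · exact absurd hbc (asymm a b hab)
  refine (total a c hac).resolve_right fun hca => h.2 (f a) ?_
  exact .tail (.tail (.single hab) hbc) hca

end IsAcyclicOrientation

namespace graphT

variable {ι α : Type*} [DecidableEq α] (S : ι → Finset α) (m : ι → ℕ)

def fiberPermIso (σ : ∀ F, Equiv.Perm (Fin (m F))) : graphT S m ≃g graphT S m where
  toEquiv := Equiv.sigmaCongrRight σ
  map_rel_iff' := and_congr_left' (Equiv.sigmaCongrRight σ).injective.ne_iff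

theorem pairwise_adj_fiber (hS : ∀ F, (S F).Nonempty) (F : ι) :
    Pairwise fun i j : Fin (m F) => (graphT S m).Adj ⟨F, i⟩ ⟨F, j⟩ :=
  fun _ _ hij => ⟨fun h => hij (eq_of_heq (Sigma.mk.inj h).2), by simpa using hS F⟩

end graphT

section FiberOrder

variable {ι : Type*} {m : ι → ℕ}

def RespectsFiberOrder (m : ι → ℕ) (d : Set ((Σ F, Fin (m F)) × (Σ F, Fin (m F)))) : Prop :=
  ∀ (F : ι) (i i' : Fin (m F)), i < i' → (⟨F, i⟩, ⟨F, i'⟩) ∈ d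

theorem RespectsFiberOrder.mem_iff_lt {G : SimpleGraph (Σ F, Fin (m F))}
    {d : Set ((Σ F, Fin (m F)) × (Σ F, Fin (m F)))} (hd : RespectsFiberOrder m d)
    (hG : IsOrientation G d) (F : ι) (i j : Fin (m F)) :
    (⟨F, i⟩, ⟨F, j⟩) ∈ d ↔ i < j := by
  refine ⟨fun h => ?_, hd F i j⟩
  rcases lt_trichotomy i j with hij | rfl | hji
  · exact hij
  · exact absurd h (hG.2 _ _ h)
  · exact absurd h (hG.2 _ _ (hd F j i hji))

def reorient (σ : ∀ F, Equiv.Perm (Fin (m F))) (d : Set ((Σ F, Fin (m F)) × (Σ F, Fin (m F)))) :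
    Set ((Σ F, Fin (m F)) × (Σ F, Fin (m F))) :=
  Prod.map (Equiv.sigmaCongrRight σ) (Equiv.sigmaCongrRight σ) ⁻¹' d

end FiberOrder

section Counting

variable {ι α : Type*} [DecidableEq α] (S : ι → Finset α) (m : ι → ℕ)

abbrev RespectingOrientations : Set (Set ((Σ F, Fin (m F)) × (Σ F, Fin (m F)))) :=
  {d | IsAcyclicOrientation (graphT S m) d ∧ RespectsFiberOrder m d}

abbrev AcyclicOrientations : Set (Set ((Σ F, Fin (m F)) × (Σ F, Fin (m F)))) :=
  {d | IsAcyclicOrientation (graphT S m) d}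

theorem isAcyclicOrientation_reorient (σ : ∀ F, Equiv.Perm (Fin (m F)))
    {d : Set ((Σ F, Fin (m F)) × (Σ F, Fin (m F)))} (hd : IsAcyclicOrientation (graphT S m) d) :
    IsAcyclicOrientation (graphT S m) (reorient σ d) :=
  hd.comap (graphT.fiberPermIso S m σ).toEmbedding

def reorientMap (p : (∀ F, Equiv.Perm (Fin (m F))) × RespectingOrientations S m) :
    AcyclicOrientations S m :=
  ⟨reorient p.1 p.2, isAcyclicOrientation_reorient S m p.1 p.2.2.1⟩

theorem existsUnique_fiber_perm (hS : ∀ F, (S F).Nonempty)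
    {D : Set ((Σ F, Fin (m F)) × (Σ F, Fin (m F)))} (hD : IsAcyclicOrientation (graphT S m) D)
    (F : ι) :
    ∃! σ : Equiv.Perm (Fin (m F)), ∀ i j, (⟨F, i⟩, ⟨F, j⟩) ∈ D ↔ σ i < σ j :=
  have := hD.isStrictTotalOrder_of_pairwise_adj (graphT.pairwise_adj_fiber S m hS F)
  existsUnique_equiv_fin_lt_iff _ (Fintype.card_fin _)

theorem reorientMap_injective (hS : ∀ F, (S F).Nonempty) : (reorientMap S m).Injective := by
  rintro ⟨σ, d, hd⟩ ⟨σ', d', hd'⟩ h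
  have hD : reorient σ d = reorient σ' d' := congrArg Subtype.val h
  have hσ : σ = σ' := funext fun F =>
    (existsUnique_fiber_perm S m hS (isAcyclicOrientation_reorient S m σ hd.1) F).unique
      (fun i j => hd.2.mem_iff_lt hd.1.1 F (σ F i) (σ F j))
      (fun i j => by rw [hD]; exact hd'.2.mem_iff_lt hd'.1.1 F _ _)
  subst hσ
  exact Prod.ext rfl (Subtype.ext (((Equiv.sigmaCongrRight σ).prodCongr
    (Equiv.sigmaCongrRight σ)).surjective.preimage_injective hD))

theorem reorientMap_surjective (hS : ∀ F, (S F).Nonempty) : (reorientMap S m).Surjective := by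
  rintro ⟨D, hD⟩
  choose σ hσ using fun F => (existsUnique_fiber_perm S m hS hD F).exists
  refine ⟨(σ, ⟨reorient (fun F => (σ F)⁻¹) D, isAcyclicOrientation_reorient S m _ hD,
    fun F i i' h => (hσ F _ _).2 (by simpa using h)⟩), Subtype.ext ?_⟩
  ext ⟨u, v⟩
  simp [reorient, reorientMap]

end Counting

/-- The number of acyclic orientations of `T` that, within each clique
`{F} × {1,…,m(F)}`, agree with the prescribed order `(F,i) → (F,i')` for `i < i'`,
equals `a(T) / ∏_F m(F)!`: equivalently, their number multiplied by `∏_F m(F)!`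
equals the total number `a(T)` of acyclic orientations of `T`. -/
theorem stmt1 {ι α : Type} [Fintype ι] [DecidableEq α]
    (S : ι → Finset α) (hS : ∀ F, (S F).Nonempty) (m : ι → ℕ) :
    {d : Set ((Σ F : ι, Fin (m F)) × (Σ F : ι, Fin (m F))) |
        IsAcyclicOrientation (graphT S m) d ∧
          ∀ (F : ι) (i i' : Fin (m F)), i < i' → (⟨F, i⟩, ⟨F, i'⟩) ∈ d}.ncard
        * ∏ F : ι, (m F).factorial =
      {d : Set ((Σ F : ι, Fin (m F)) × (Σ F : ι, Fin (m F))) |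
        IsAcyclicOrientation (graphT S m) d}.ncard := by
  show (RespectingOrientations S m).ncard * _ = (AcyclicOrientations S m).ncard
  have hcard := Nat.card_congr (Equiv.ofBijective _
    ⟨reorientMap_injective S m hS, reorientMap_surjective S m hS⟩)
  simp only [Nat.card_prod, Nat.card_pi, Nat.card_perm, Nat.card_fin] at hcard
  rw [← Nat.card_coe_set_eq, ← Nat.card_coe_set_eq, ← hcard, mul_comm]
end

section
/- For a finite simple graph G, the number of acyclic orientations of G equals (-1)^{|V(G)|} times the chromatic polynomial of G evaluated at -1. -/
/-
Both sides satisfy the deletion–contraction recursion for an edge `uv`. Splitting the proper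
colorings of `G - uv` according to whether `u` and `v` get the same color gives
`P(G - uv) = P(G) + P(G / uv)`. An acyclic orientation of `G - uv` extends to one of `G` by
orienting `uv` in at least one way, and in both ways exactly when it has no directed path between
`u` and `v`; those orientations are in bijection with the acyclic orientations of `G / uv` (push
forward along the contraction, pull back along it), so `a(G) = a(G - uv) + a(G / uv)`. Since
`G / uv` has one vertex fewer, `(-1)^|V| P(G, -1)` obeys the same recursion, and both equal `1`
on edgeless graphs.
-/

open Relation

local notation "arc" d => fun p q => (p, q) ∈ d

section Arcs

variable {α : Type*} {d : Set (α × α)} {a b u v x y : α}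

theorem transGen_insert (h : TransGen (arc insert (a, b) d) x y) :
    TransGen (arc d) x y ∨ ReflTransGen (arc d) x a ∧ ReflTransGen (arc d) b y := by
  induction h with
  | single h =>
    obtain h | h := Set.mem_insert_iff.1 h
    · obtain ⟨rfl, rfl⟩ := Prod.mk.inj h
      exact .inr ⟨.refl, .refl⟩
    · exact .inl (.single h)
  | tail _ h ih =>
    obtain h | h := Set.mem_insert_iff.1 h
    · obtain ⟨rfl, rfl⟩ := Prod.mk.inj h
      exact .inr ⟨ih.elim TransGen.to_reflTransGen And.left, .refl⟩
    · exact ih.imp (·.tail h) fun ⟨hxa, hby⟩ => ⟨hxa, hby.tail h⟩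

theorem irrefl_transGen_insert_iff :
    (∀ z, ¬TransGen (arc insert (a, b) d) z z) ↔
      (∀ z, ¬TransGen (arc d) z z) ∧ ¬ReflTransGen (arc d) b a := by
  have lift {x y} (h : TransGen (arc d) x y) : TransGen (arc insert (a, b) d) x y :=
    TransGen.mono (fun _ _ => Set.mem_insert_of_mem _) _ _ h
  refine ⟨fun h => ⟨fun z hz => h z (lift hz), fun hba => h a ?_⟩, ?_⟩
  · obtain rfl | hba := reflTransGen_iff_eq_or_transGen.1 hba
    · exact .single (Set.mem_insert _ _)
    · exact .head (Set.mem_insert _ _) (lift hba)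
  · rintro ⟨hd, hba⟩ z hz
    obtain hz | ⟨hza, hbz⟩ := transGen_insert hz
    · exact hd z hz
    · exact hba (hbz.trans hza)

/-- The relation in `h` is `d` with its arcs at `v` redirected to `u`: the contraction of `d`
along `uv`, read on `V`. -/
theorem transGen_redirect (hd : ∀ z, ¬TransGen (arc d) z z)
    (h : TransGen (fun p q => (p, q) ∈ d ∨ p = u ∧ (v, q) ∈ d ∨ q = u ∧ (p, v) ∈ d) a b) :
    TransGen (arc insert (u, v) d) a b ∨ TransGen (arc insert (v, u) d) a b := by
  have old {x y e} (h : (x, y) ∈ d) : (x, y) ∈ insert e d := Set.mem_insert_of_mem _ h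
  have new {x y} : (x, y) ∈ insert (x, y) d := Set.mem_insert _ _
  have lift {e x y} (h : TransGen (arc d) x y) : TransGen (arc insert e d) x y :=
    TransGen.mono (fun _ _ => old) _ _ h
  induction h with
  | single h =>
    obtain h | ⟨rfl, h⟩ | ⟨rfl, h⟩ := h
    · exact .inl (.single (old h))
    · exact .inl (.head new (.single (old h)))
    · exact .inr (.tail (.single (old h)) new)
  | tail _ h ih =>
    obtain h | ⟨rfl, h⟩ | ⟨rfl, h⟩ := h
    · exact ih.imp (·.tail (old h)) (·.tail (old h))
    · refine .inl ?_
      obtain ih | ih := ih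
      · exact (ih.tail new).tail (old h)
      · obtain ih | ⟨ih, -⟩ := transGen_insert ih
        · exact ((lift ih).tail new).tail (old h)
        · exact lift (.tail' ih h)
    · refine .inr ?_
      obtain ih | ih := ih
      · obtain ih | ⟨-, ih⟩ := transGen_insert ih
        · exact ((lift ih).tail (old h)).tail new
        · exact absurd (.tail' ih h) (hd _)
      · exact (ih.tail (old h)).tail new

end Arcs

section MergeVertex

variable {V : Type*} {u v : V}

/-- `G.map (mergeVertex hne)` is the contraction of `G` along `uv`. -/
noncomputable def mergeVertex (hne : u ≠ v) (a : V) : {x : V // x ≠ v} :=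
  open scoped Classical in if h : a = v then ⟨u, hne⟩ else ⟨a, h⟩

variable (hne : u ≠ v)

@[simp] theorem mergeVertex_self : mergeVertex hne v = ⟨u, hne⟩ := dif_pos rfl

theorem mergeVertex_of_ne {a : V} (ha : a ≠ v) : mergeVertex hne a = ⟨a, ha⟩ := dif_neg ha

@[simp] theorem mergeVertex_coe (x : {x : V // x ≠ v}) : mergeVertex hne x = x :=
  mergeVertex_of_ne hne x.2

theorem mergeVertex_eq_mergeVertex_iff {a b : V} :
    mergeVertex hne a = mergeVertex hne b ↔ a = b ∨ s(a, b) = s(u, v) := by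
  rw [Sym2.eq_iff]
  by_cases ha : a = v <;> by_cases hb : b = v <;>
    simp only [mergeVertex, ha, hb, dite_true, dite_false, Subtype.mk.injEq] <;> grind

theorem apply_mergeVertex {α : Type*} {c : V → α} (hc : c u = c v) (a : V) :
    c (mergeVertex hne a) = c a := by
  by_cases ha : a = v
  · simp [ha, hc]
  · simp [mergeVertex_of_ne hne ha]

theorem deleteEdges_adj_iff_mergeVertex_ne (G : SimpleGraph V) {a b : V} :
    (G.deleteEdges {s(u, v)}).Adj a b ↔ G.Adj a b ∧ mergeVertex hne a ≠ mergeVertex hne b := by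
  rw [SimpleGraph.deleteEdges_adj, Set.mem_singleton_iff, Ne, mergeVertex_eq_mergeVertex_iff]
  exact and_congr_right fun h => by simp [h.ne]

end MergeVertex

section ProperColoring

variable {V α : Type*}

abbrev ProperColoring (G : SimpleGraph V) (α : Type*) :=
  {c : V → α // ∀ a b, G.Adj a b → c a ≠ c b}

variable {G : SimpleGraph V} {u v : V}

noncomputable def properColoringMapMergeVertexEquiv (huv : G.Adj u v) :
    {c : ProperColoring (G.deleteEdges {s(u, v)}) α // c.1 u = c.1 v} ≃
      ProperColoring (G.map (mergeVertex huv.ne)) α where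
  toFun c := ⟨fun x => c.1.1 x, by
    rintro _ _ ⟨hne, a, b, hab, rfl, rfl⟩
    dsimp only
    rw [apply_mergeVertex huv.ne c.2, apply_mergeVertex huv.ne c.2]
    exact c.1.2 a b ((deleteEdges_adj_iff_mergeVertex_ne huv.ne G).2 ⟨hab, hne⟩)⟩
  invFun c := ⟨⟨c.1 ∘ mergeVertex huv.ne, fun a b hab =>
    have ⟨hab, hne⟩ := (deleteEdges_adj_iff_mergeVertex_ne huv.ne G).1 hab
    c.2 _ _ ⟨hne, a, b, hab, rfl, rfl⟩⟩, by simp [mergeVertex_of_ne huv.ne huv.ne]⟩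
  left_inv c := by ext a; exact apply_mergeVertex huv.ne c.2 a
  right_inv c := by ext x; simp

theorem isProper_deleteEdges_and_ne_iff (huv : G.Adj u v) {c : V → α} :
    ((∀ a b, (G.deleteEdges {s(u, v)}).Adj a b → c a ≠ c b) ∧ c u ≠ c v) ↔
      ∀ a b, G.Adj a b → c a ≠ c b := by
  refine ⟨fun ⟨hc, huv'⟩ a b hab => ?_, fun hc => ⟨fun a b hab => hc a b hab.1, hc u v huv⟩⟩
  by_cases he : s(a, b) = s(u, v)
  · obtain ⟨rfl, rfl⟩ | ⟨rfl, rfl⟩ := Sym2.eq_iff.1 he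
    exacts [huv', huv'.symm]
  · exact hc a b (SimpleGraph.deleteEdges_adj.2 ⟨hab, he⟩)

theorem card_properColoring_deleteEdges [Finite V] [Finite α] (huv : G.Adj u v) :
    Nat.card (ProperColoring (G.deleteEdges {s(u, v)}) α) =
      Nat.card (ProperColoring G α) +
        Nat.card (ProperColoring (G.map (mergeVertex huv.ne)) α) := by
  classical
  rw [← Nat.card_congr (properColoringMapMergeVertexEquiv huv), ← Nat.card_sum]
  refine Nat.card_congr ((Equiv.sumCompl fun c => c.1 u = c.1 v).symm.trans
    (Equiv.sumComm _ _ |>.trans (Equiv.sumCongr ?_ (Equiv.refl _))))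
  exact (Equiv.subtypeSubtypeEquivSubtypeInter _ _).trans
    (Equiv.subtypeEquivRight fun c => isProper_deleteEdges_and_ne_iff huv)

theorem card_properColoring_bot [Finite V] (α : Type*) :
    Nat.card (ProperColoring (⊥ : SimpleGraph V) α) = Nat.card α ^ Nat.card V := by
  rw [← Nat.card_fun]
  exact Nat.card_congr (Equiv.subtypeUnivEquiv fun c a b h => h.elim)

end ProperColoring

section Orientation

variable {V : Type*} {G : SimpleGraph V} {d : Set (V × V)} {u v a b : V}

theorem IsOrientation.adj (hd : IsOrientation G d) (h : (a, b) ∈ d) : G.Adj a b :=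
  (hd.1 a b).1 (.inl h)

theorem IsOrientation.notMem_of_not_adj (hd : IsOrientation G d) (h : ¬G.Adj a b) :
    (a, b) ∉ d :=
  fun hab => h (hd.adj hab)

theorem isOrientation_insert_iff (huv : G.Adj u v) (h₁ : (u, v) ∉ d) (h₂ : (v, u) ∉ d) :
    IsOrientation G (insert (u, v) d) ↔ IsOrientation (G.deleteEdges {s(u, v)}) d := by
  simp only [IsOrientation, Set.mem_insert_iff, Prod.mk.injEq, SimpleGraph.deleteEdges_adj,
    Set.mem_singleton_iff, Sym2.eq_iff]
  constructor
  · rintro ⟨h, h'⟩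
    refine ⟨fun a b => ?_, fun a b hab hba => h' a b (.inr hab) (.inr hba)⟩
    have := h a b
    grind
  · rintro ⟨h, h'⟩
    refine ⟨fun a b => ?_, ?_⟩
    · have := h a b
      have := G.adj_comm a b
      grind
    · have := huv.ne
      grind

theorem isAcyclicOrientation_insert_iff (huv : G.Adj u v) (h₁ : (u, v) ∉ d) (h₂ : (v, u) ∉ d) :
    IsAcyclicOrientation G (insert (u, v) d) ↔
      IsAcyclicOrientation (G.deleteEdges {s(u, v)}) d ∧ ¬ReflTransGen (arc d) v u := by
  rw [IsAcyclicOrientation, IsAcyclicOrientation, isOrientation_insert_iff huv h₁ h₂,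
    irrefl_transGen_insert_iff, and_assoc]

theorem bijOn_sdiff_singleton_acyclicOrientation (huv : G.Adj u v) :
    Set.BijOn (· \ {(u, v)}) {d | IsAcyclicOrientation G d ∧ (u, v) ∈ d}
      {d | IsAcyclicOrientation (G.deleteEdges {s(u, v)}) d ∧ ¬ReflTransGen (arc d) v u} := by
  have notMem {d} (hd : IsOrientation (G.deleteEdges {s(u, v)}) d) : (u, v) ∉ d ∧ (v, u) ∉ d :=
    ⟨hd.notMem_of_not_adj (by simp), hd.notMem_of_not_adj (by simp [Sym2.eq_swap])⟩
  refine Set.InvOn.bijOn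
    (Set.insert_erase_invOn.mono (fun d hd => hd.2) fun d hd => (notMem hd.1.1).1) ?_ ?_
  · rintro d ⟨hd, huvd⟩
    have hvud : (v, u) ∉ d := hd.1.2 u v huvd
    refine (isAcyclicOrientation_insert_iff huv (fun h => h.2 rfl) (fun h => hvud h.1)).1 ?_
    rwa [Set.insert_sdiff_self_of_mem huvd]
  · rintro d hd
    exact ⟨(isAcyclicOrientation_insert_iff huv (notMem hd.1.1).1 (notMem hd.1.1).2).2 hd,
      Set.mem_insert _ _⟩

theorem acyclicOrientation_bot : {d | IsAcyclicOrientation (⊥ : SimpleGraph V) d} = {∅} := by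
  refine Set.eq_singleton_iff_unique_mem.2 ⟨?_, fun d hd => ?_⟩
  · refine ⟨⟨fun a b => ?_, fun a b h => h.elim⟩, fun z h => ?_⟩
    · simp
    · rcases h with h | ⟨-, h⟩ <;> exact h
  · exact Set.eq_empty_of_forall_notMem fun ⟨a, b⟩ h => hd.1.adj h

end Orientation

section Contraction

variable {V W : Type*} {G : SimpleGraph V} {u v : V}

def comapArcs (G : SimpleGraph V) (f : V → W) (dc : Set (W × W)) : Set (V × V) :=
  {p | G.Adj p.1 p.2 ∧ (f p.1, f p.2) ∈ dc}

theorem image_comapArcs {f : V → W} {dc : Set (W × W)} (hdc : IsOrientation (G.map f) dc) :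
    Prod.map f f '' comapArcs G f dc = dc := by
  refine subset_antisymm (by rintro _ ⟨p, ⟨-, hp⟩, rfl⟩; exact hp) fun ⟨x, y⟩ hxy => ?_
  obtain ⟨-, a, b, hab, rfl, rfl⟩ := hdc.adj hxy
  exact ⟨(a, b), ⟨hab, hxy⟩, rfl⟩

theorem comapArcs_mergeVertex_isAcyclicOrientation (hne : u ≠ v) {dc : Set (_ × _)}
    (hdc : IsAcyclicOrientation (G.map (mergeVertex hne)) dc) :
    IsAcyclicOrientation (G.deleteEdges {s(u, v)}) (comapArcs G (mergeVertex hne) dc) ∧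
      ¬ReflTransGen (arc comapArcs G (mergeVertex hne) dc) v u ∧
      ¬ReflTransGen (arc comapArcs G (mergeVertex hne) dc) u v := by
  have noPath {a b} (hab : mergeVertex hne a = mergeVertex hne b)
      (h : TransGen (arc comapArcs G (mergeVertex hne) dc) a b) : False := by
    have h : TransGen (arc dc) (mergeVertex hne a) (mergeVertex hne b) :=
      TransGen.lift _ (fun _ _ h => h.2) _ _ h
    exact hdc.2 _ (hab ▸ h)
  have noReflPath {a b} (hab : a ≠ b) (hf : mergeVertex hne a = mergeVertex hne b) :
      ¬ReflTransGen (arc comapArcs G (mergeVertex hne) dc) a b := fun h =>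
    (reflTransGen_iff_eq_or_transGen.1 h).elim (fun h => hab h.symm) (noPath hf)
  have hmerge : mergeVertex hne u = mergeVertex hne v := by simp [mergeVertex_of_ne hne hne]
  refine ⟨⟨⟨fun a b => ?_, fun a b hab hba => hdc.1.2 _ _ hab.2 hba.2⟩, fun z => noPath rfl⟩,
    noReflPath hne.symm hmerge.symm, noReflPath hne hmerge⟩
  rw [deleteEdges_adj_iff_mergeVertex_ne hne]
  constructor
  · rintro (⟨hab, h⟩ | ⟨hab, h⟩)
    · exact ⟨hab, (hdc.1.adj h).1⟩
    · exact ⟨hab.symm, (hdc.1.adj h).1.symm⟩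
  · rintro ⟨hab, hne'⟩
    exact ((hdc.1.1 _ _).2 ⟨hne', a, b, hab, rfl, rfl⟩).imp (⟨hab, ·⟩) (⟨hab.symm, ·⟩)

theorem irrefl_transGen_image_mergeVertex (hne : u ≠ v) {d : Set (V × V)}
    (hd : ∀ z, ¬TransGen (arc d) z z) (hvu : ¬ReflTransGen (arc d) v u)
    (huv : ¬ReflTransGen (arc d) u v) (x : {x // x ≠ v}) :
    ¬TransGen (arc Prod.map (mergeVertex hne) (mergeVertex hne) '' d) x x := by
  have step {x y} (h : (x, y) ∈ Prod.map (mergeVertex hne) (mergeVertex hne) '' d) :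
      ((x : V), (y : V)) ∈ d ∨ (x : V) = u ∧ (v, (y : V)) ∈ d ∨ (y : V) = u ∧ ((x : V), v) ∈ d := by
    obtain ⟨⟨a, b⟩, hab, h⟩ := h
    obtain ⟨rfl, rfl⟩ := Prod.mk.inj h
    by_cases ha : a = v <;> by_cases hb : b = v
    · subst ha hb; exact absurd (.single hab) (hd _)
    · subst ha; simp [mergeVertex_of_ne hne hb, hab]
    · subst hb; simp [mergeVertex_of_ne hne ha, hab]
    · simp [mergeVertex_of_ne hne ha, mergeVertex_of_ne hne hb, hab]
  intro hx
  obtain h | h := transGen_redirect hd (TransGen.lift Subtype.val (fun _ _ => step) _ _ hx)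
  · exact irrefl_transGen_insert_iff.2 ⟨hd, hvu⟩ _ h
  · exact irrefl_transGen_insert_iff.2 ⟨hd, huv⟩ _ h

theorem image_mergeVertex_isAcyclicOrientation (hne : u ≠ v) {d : Set (V × V)}
    (hd : IsAcyclicOrientation (G.deleteEdges {s(u, v)}) d) (hvu : ¬ReflTransGen (arc d) v u)
    (huv : ¬ReflTransGen (arc d) u v) :
    IsAcyclicOrientation (G.map (mergeVertex hne))
      (Prod.map (mergeVertex hne) (mergeVertex hne) '' d) := by
  have acyclic := irrefl_transGen_image_mergeVertex hne hd.2 hvu huv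
  refine ⟨⟨fun x y => ⟨?_, ?_⟩, fun x y hxy hyx => acyclic x (.head hxy (.single hyx))⟩, acyclic⟩
  · rintro (⟨⟨a, b⟩, hab, h⟩ | ⟨⟨a, b⟩, hab, h⟩) <;> obtain ⟨rfl, rfl⟩ := Prod.mk.inj h <;>
      obtain ⟨hab, hne'⟩ := (deleteEdges_adj_iff_mergeVertex_ne hne G).1 (hd.1.adj hab)
    · exact ⟨hne', a, b, hab, rfl, rfl⟩
    · exact ⟨hne'.symm, b, a, hab.symm, rfl, rfl⟩
  · rintro ⟨hne', a, b, hab, rfl, rfl⟩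
    exact ((hd.1.1 a b).2 ((deleteEdges_adj_iff_mergeVertex_ne hne G).2 ⟨hab, hne'⟩)).imp
      (Set.mem_image_of_mem _) (Set.mem_image_of_mem _)

theorem comapArcs_image_mergeVertex (hne : u ≠ v) {d : Set (V × V)}
    (hd : IsOrientation (G.deleteEdges {s(u, v)}) d)
    (hdc : IsOrientation (G.map (mergeVertex hne))
      (Prod.map (mergeVertex hne) (mergeVertex hne) '' d)) :
    comapArcs G (mergeVertex hne) (Prod.map (mergeVertex hne) (mergeVertex hne) '' d) = d := by
  refine subset_antisymm (fun ⟨a, b⟩ ⟨hab, himg⟩ => ?_)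
    fun ⟨a, b⟩ hab => ⟨(hd.adj hab).1, Set.mem_image_of_mem _ hab⟩
  have hne' : mergeVertex hne a ≠ mergeVertex hne b := (hdc.adj himg).1
  refine ((hd.1 a b).2 ((deleteEdges_adj_iff_mergeVertex_ne hne G).2 ⟨hab, hne'⟩)).resolve_right
    fun hba => ?_
  exact hdc.2 _ _ himg (Set.mem_image_of_mem _ hba)

theorem bijOn_image_mergeVertex (hne : u ≠ v) :
    Set.BijOn (Prod.map (mergeVertex hne) (mergeVertex hne) '' ·)
      {d | IsAcyclicOrientation (G.deleteEdges {s(u, v)}) d ∧ ¬ReflTransGen (arc d) v u ∧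
        ¬ReflTransGen (arc d) u v}
      {dc | IsAcyclicOrientation (G.map (mergeVertex hne)) dc} := by
  refine Set.InvOn.bijOn (f' := comapArcs G (mergeVertex hne)) ⟨fun d hd => ?_, fun dc hdc => ?_⟩
    (fun d hd => image_mergeVertex_isAcyclicOrientation hne hd.1 hd.2.1 hd.2.2)
    fun dc hdc => comapArcs_mergeVertex_isAcyclicOrientation hne hdc
  · exact comapArcs_image_mergeVertex hne hd.1.1
      (image_mergeVertex_isAcyclicOrientation hne hd.1 hd.2.1 hd.2.2).1
  · exact image_comapArcs hdc.1

theorem ncard_acyclicOrientation_eq_deleteEdges_add [Finite V] (huv : G.Adj u v) :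
    {d | IsAcyclicOrientation G d}.ncard =
      {d | IsAcyclicOrientation (G.deleteEdges {s(u, v)}) d}.ncard +
        {dc | IsAcyclicOrientation (G.map (mergeVertex huv.ne)) dc}.ncard := by
  have split : {d | IsAcyclicOrientation G d} =
      {d | IsAcyclicOrientation G d ∧ (u, v) ∈ d} ∪
        {d | IsAcyclicOrientation G d ∧ (v, u) ∈ d} := by
    ext d
    exact ⟨fun hd => ((hd.1.1 u v).2 huv).imp (⟨hd, ·⟩) (⟨hd, ·⟩), fun h => h.elim (·.1) (·.1)⟩
  have disj : Disjoint {d | IsAcyclicOrientation G d ∧ (u, v) ∈ d}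
      {d | IsAcyclicOrientation G d ∧ (v, u) ∈ d} :=
    Set.disjoint_left.2 fun d ⟨hd, huvd⟩ ⟨_, hvud⟩ => hd.1.2 u v huvd hvud
  have union :
      {d | IsAcyclicOrientation (G.deleteEdges {s(u, v)}) d ∧ ¬ReflTransGen (arc d) v u} ∪
        {d | IsAcyclicOrientation (G.deleteEdges {s(u, v)}) d ∧ ¬ReflTransGen (arc d) u v} =
      {d | IsAcyclicOrientation (G.deleteEdges {s(u, v)}) d} := by
    refine (Set.union_subset (fun d hd => hd.1) fun d hd => hd.1).antisymm fun d hd => ?_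
    by_cases hvu : ReflTransGen (arc d) v u
    · refine .inr ⟨hd, fun huv' => ?_⟩
      obtain h | h := reflTransGen_iff_eq_or_transGen.1 hvu
      · exact huv.ne h
      · exact hd.2 v (h.trans_left huv')
    · exact .inl ⟨hd, hvu⟩
  have inter :
      {d | IsAcyclicOrientation (G.deleteEdges {s(u, v)}) d ∧ ¬ReflTransGen (arc d) v u} ∩
        {d | IsAcyclicOrientation (G.deleteEdges {s(u, v)}) d ∧ ¬ReflTransGen (arc d) u v} =
      {d | IsAcyclicOrientation (G.deleteEdges {s(u, v)}) d ∧ ¬ReflTransGen (arc d) v u ∧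
        ¬ReflTransGen (arc d) u v} := by
    ext d
    simp only [Set.mem_inter_iff, Set.mem_ofPred_eq]
    tauto
  have swap := bijOn_sdiff_singleton_acyclicOrientation huv.symm
  rw [Sym2.eq_swap] at swap
  rw [split, Set.ncard_union_eq disj, (bijOn_sdiff_singleton_acyclicOrientation huv).ncard_eq,
    swap.ncard_eq, ← (bijOn_image_mergeVertex huv.ne).ncard_eq, ← inter, ← union,
    Set.ncard_union_add_ncard_inter]

end Contraction

section ChromaticPolynomial

variable {V : Type*}

def IsChromaticPolynomial (G : SimpleGraph V) (P : Polynomial ℤ) : Prop :=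
  ∀ n : ℕ, P.eval (n : ℤ) = Nat.card (ProperColoring G (Fin n))

theorem IsChromaticPolynomial.eq {G : SimpleGraph V} {P Q : Polynomial ℤ}
    (hP : IsChromaticPolynomial G P) (hQ : IsChromaticPolynomial G Q) : P = Q :=
  Polynomial.eq_of_infinite_eval_eq P Q <|
    Set.infinite_of_injective_forall_mem Nat.cast_injective fun n => (hP n).trans (hQ n).symm

theorem isChromaticPolynomial_bot [Fintype V] :
    IsChromaticPolynomial (⊥ : SimpleGraph V) (Polynomial.X ^ Fintype.card V) := fun n => by
  rw [card_properColoring_bot, Nat.card_eq_fintype_card (α := V)]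
  simp

theorem IsChromaticPolynomial.deleteEdges_sub_map [Finite V] {G : SimpleGraph V} {u v : V} (huv : G.Adj u v)
    {P Q : Polynomial ℤ} (hP : IsChromaticPolynomial (G.deleteEdges {s(u, v)}) P)
    (hQ : IsChromaticPolynomial (G.map (mergeVertex huv.ne)) Q) :
    IsChromaticPolynomial G (P - Q) := fun n => by
  rw [Polynomial.eval_sub, hP, hQ, card_properColoring_deleteEdges huv]
  push_cast
  ring

theorem exists_isChromaticPolynomial_ncard_acyclicOrientation [Fintype V] (G : SimpleGraph V) :
    ∃ P, IsChromaticPolynomial G P ∧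
      ({d | IsAcyclicOrientation G d}.ncard : ℤ) = (-1) ^ Fintype.card V * P.eval (-1) := by
  classical
  induction hV : Fintype.card V using Nat.strong_induction_on generalizing V with
  | _ N ihV =>
    induction G using WellFoundedLT.induction with
    | _ G ihG =>
      by_cases hG : G = ⊥
      · subst hG
        refine ⟨_, isChromaticPolynomial_bot, ?_⟩
        simp [acyclicOrientation_bot, hV, ← mul_pow]
      obtain ⟨u, v, huv⟩ : ∃ u v, G.Adj u v := by
        simpa [SimpleGraph.eq_bot_iff_forall_not_adj] using hG
      have hlt : G.deleteEdges {s(u, v)} < G :=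
        (G.deleteEdges_le _).lt_of_ne fun h =>
          (SimpleGraph.deleteEdges_adj.1 (by rw [h]; exact huv)).2 (Set.mem_singleton _)
      have hcard : Fintype.card {x // x ≠ v} + 1 = N := by
        rw [← hV, ← Fintype.card_option]
        exact Fintype.card_congr (Equiv.optionSubtypeNe v)
      obtain ⟨P, hP, hPacyc⟩ := ihG _ hlt
      obtain ⟨Q, hQ, hQacyc⟩ := ihV _ (by omega) (G.map (mergeVertex huv.ne)) rfl
      refine ⟨P - Q, hP.deleteEdges_sub_map huv hQ, ?_⟩
      rw [ncard_acyclicOrientation_eq_deleteEdges_add huv, Nat.cast_add, hPacyc, hQacyc,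
        Polynomial.eval_sub, ← hcard]
      ring

end ChromaticPolynomial

/-- Stanley's theorem: for a finite simple graph `G`, the number of acyclic orientations
of `G` equals `(-1)^{|V|}` times the chromatic polynomial of `G` evaluated at `-1`. -/
theorem stmt3 {V : Type} [Fintype V] (G : SimpleGraph V) (P : Polynomial ℤ)
    (hP : ∀ n : ℕ,
      P.eval (n : ℤ) =
        Nat.card {c : V → Fin n // ∀ u v : V, G.Adj u v → c u ≠ c v}) :
    ({d : Set (V × V) | IsAcyclicOrientation G d}.ncard : ℤ) =
      (-1) ^ Fintype.card V * P.eval (-1) := by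
  obtain ⟨Q, hQ, hacyc⟩ := exists_isChromaticPolynomial_ncard_acyclicOrientation G
  rwa [IsChromaticPolynomial.eq hP hQ]
end

section
/- The space of strictly increasing directed paths from 0 to k+1 in ℝⁿ (paths p : [0,1] → ℝⁿ with each coordinate strictly increasing, p(0) = 0, p(1) = (k_1+1,...,k_n+1)) deformation retracts data: the map Q sending such a path p to the tuple of preimages (p_i^{-1}(1), ..., p_i^{-1}(k_i))_{i=1}^n is a well-defined continuous map into the open product of simplices ∏_i {0 < x_{i1} < ... < x_{ik_i} < 1}, and composing with the piecewise-linear path construction P gives P ∘ Q homotopic to the identity via the straight-line homotopy, while Q ∘ P is the identity. -/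
open unitInterval

variable (n : ℕ) (k : Fin n → ℕ)

/-- The open product of simplices `∏_i {0 < x_{i1} < ⋯ < x_{ik_i} < 1}`. -/
abbrev SimpProd := {x : (i : Fin n) → Fin (k i) → ℝ //
  (∀ i, StrictMono (x i)) ∧ ∀ i l, x i l ∈ Set.Ioo (0 : ℝ) 1}

/-- The space of strictly increasing directed paths from `0` to `k+1` in `ℝⁿ`,
with the compact-open topology. -/
abbrev StrictPathSp := {p : C(I, Fin n → ℝ) //
  (∀ i : Fin n, StrictMono fun t : I => p t i) ∧
    (∀ i : Fin n, p 0 i = 0) ∧ ∀ i : Fin n, p 1 i = (k i : ℝ) + 1}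

namespace Stmt4Aux

/-- clamp to [0,1] -/
noncomputable def clamp (r : ℝ) : ℝ := max 0 (min r 1)

lemma clamp_mono : Monotone clamp := fun a b h =>
  max_le_max le_rfl (min_le_min h le_rfl)

lemma clamp_of_nonpos {r : ℝ} (h : r ≤ 0) : clamp r = 0 := by
  unfold clamp
  rw [max_eq_left]
  exact le_trans (min_le_left _ _) h

lemma clamp_of_one_le {r : ℝ} (h : 1 ≤ r) : clamp r = 1 := by
  unfold clamp
  rw [min_eq_right h, max_eq_right zero_le_one]

lemma clamp_of_mem {r : ℝ} (h0 : 0 ≤ r) (h1 : r ≤ 1) : clamp r = r := by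
  unfold clamp
  rw [min_eq_left h1, max_eq_right h0]

lemma continuous_clamp : Continuous clamp :=
  continuous_const.max ((continuous_id.min continuous_const))

/-- extended knots: `0, y 0, …, y (k'-1), 1, 1, 1, …` -/
noncomputable def knots (k' : ℕ) (y : Fin k' → ℝ) : ℕ → ℝ :=
  fun m => if h0 : m = 0 then 0 else if h : m ≤ k' then y ⟨m - 1, by omega⟩ else 1

lemma knots_zero (k' : ℕ) (y : Fin k' → ℝ) : knots k' y 0 = 0 := by simp [knots]

lemma knots_top (k' : ℕ) (y : Fin k' → ℝ) {m : ℕ} (h : k' < m) : knots k' y m = 1 := by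
  have : m ≠ 0 := by omega
  simp [knots, this, not_le.mpr h, Nat.not_le.mpr h]

lemma knots_of_pos (k' : ℕ) (y : Fin k' → ℝ) {m : ℕ} (h0 : m ≠ 0) (h : m ≤ k') :
    knots k' y m = y ⟨m - 1, by omega⟩ := by
  simp [knots, h0, h]

section
variable {k' : ℕ} {y : Fin k' → ℝ} (hy : StrictMono y) (hy2 : ∀ l, y l ∈ Set.Ioo (0:ℝ) 1)

include hy hy2 in
lemma knot_step : ∀ m ≤ k', knots k' y m < knots k' y (m + 1) := by
  intro m hm
  rcases Nat.eq_zero_or_pos m with h0 | h0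
  · subst h0
    rw [knots_zero]
    rcases Nat.lt_or_ge k' 1 with h1 | h1
    · rw [knots_top k' y (by omega)]; norm_num
    · rw [knots_of_pos k' y (by omega) (by omega)]
      exact (hy2 _).1
  · rw [knots_of_pos k' y (by omega) hm]
    rcases Nat.lt_or_ge k' (m+1) with h1 | h1
    · rw [knots_top k' y h1]
      exact (hy2 _).2
    · rw [knots_of_pos k' y (by omega) h1]
      exact hy (by simp; omega)

include hy hy2 in
lemma knot_lt : ∀ m m' : ℕ, m < m' → m ≤ k' → knots k' y m < knots k' y m' := by
  intro m m' hlt hm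
  induction m' with
  | zero => omega
  | succ j ih =>
    rcases Nat.lt_or_ge j m with h | h
    · have : m = j := by omega
      subst this
      exact knot_step hy hy2 m hm
    · rcases Nat.eq_or_lt_of_le h with h' | h'
      · subst h'
        exact knot_step hy hy2 m hm
      · rcases Nat.lt_or_ge k' (j+1) with h2 | h2
        · rcases Nat.lt_or_ge k' j with h3 | h3
          · rw [knots_top k' y h3] at *
            rw [knots_top k' y h2]
            exact ih h' 
          · -- j ≤ k' < j+1 so j = k'
            calc knots k' y m < knots k' y j := ih h'
              _ < knots k' y (j+1) := knot_step hy hy2 j h3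
        · calc knots k' y m < knots k' y j := ih h'
            _ < knots k' y (j+1) := knot_step hy hy2 j (by omega)

include hy hy2 in
lemma knot_le : ∀ m m' : ℕ, m ≤ m' → knots k' y m ≤ knots k' y m' := by
  intro m m' hle
  rcases Nat.eq_or_lt_of_le hle with h | h
  · subst h; rfl
  rcases Nat.lt_or_ge k' m with h2 | h2
  · rw [knots_top k' y h2, knots_top k' y (by omega)]
  · exact (knot_lt hy hy2 m m' h h2).le

include hy hy2 in
lemma knot_nonneg (m : ℕ) : 0 ≤ knots k' y m := by
  have := knot_le hy hy2 0 m (Nat.zero_le m)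
  rwa [knots_zero] at this

include hy hy2 in
lemma knot_le_one (m : ℕ) : knots k' y m ≤ 1 := by
  rcases Nat.lt_or_ge k' m with h | h
  · rw [knots_top k' y h]
  · have h3 : knots k' y (k'+1) = 1 := knots_top k' y (by omega)
    have := knot_le hy hy2 m (k'+1) (by omega)
    rwa [h3] at this

end

/-- one linear segment, clamped -/
noncomputable def seg (k' : ℕ) (y : Fin k' → ℝ) (m : ℕ) (t : ℝ) : ℝ :=
  clamp ((t - knots k' y m) / (knots k' y (m+1) - knots k' y m))

/-- the piecewise linear function -/
noncomputable def pl (k' : ℕ) (y : Fin k' → ℝ) (t : ℝ) : ℝ :=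
  ∑ m ∈ Finset.range (k'+1), seg k' y m t

section
variable {k' : ℕ} {y : Fin k' → ℝ} (hy : StrictMono y) (hy2 : ∀ l, y l ∈ Set.Ioo (0:ℝ) 1)

include hy hy2 in
lemma seg_mono {m : ℕ} (hm : m ≤ k') : Monotone (seg k' y m) := by
  intro t t' h
  have hd : 0 < knots k' y (m+1) - knots k' y m :=
    sub_pos.mpr (knot_step hy hy2 m hm)
  apply clamp_mono
  gcongr

include hy hy2 in
lemma pl_eval_knot {m0 : ℕ} (hm0 : m0 ≤ k' + 1) : pl k' y (knots k' y m0) = m0 := by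
  unfold pl
  have : ∀ m ∈ Finset.range (k'+1), seg k' y m (knots k' y m0) = if m < m0 then 1 else 0 := by
    intro m hm
    rw [Finset.mem_range] at hm
    have hd : 0 < knots k' y (m+1) - knots k' y m :=
      sub_pos.mpr (knot_step hy hy2 m (by omega))
    unfold seg
    rcases Nat.lt_or_ge m m0 with h | h
    · rw [if_pos h]
      apply clamp_of_one_le
      rw [le_div_iff₀ hd]
      have : knots k' y (m+1) ≤ knots k' y m0 := knot_le hy hy2 _ _ (by omega)
      linarith
    · rw [if_neg (by omega)]
      apply clamp_of_nonpos
      apply div_nonpos_of_nonpos_of_nonneg _ hd.le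
      have : knots k' y m0 ≤ knots k' y m := knot_le hy hy2 _ _ h
      linarith
  rw [Finset.sum_congr rfl this, Finset.sum_ite, Finset.sum_const, Finset.sum_const,
    smul_zero, add_zero, nsmul_eq_mul, mul_one]
  have : Finset.filter (fun m => m < m0) (Finset.range (k'+1)) = Finset.range m0 := by
    ext m
    simp only [Finset.mem_filter, Finset.mem_range]
    omega
  rw [this, Finset.card_range]

include hy hy2 in
lemma pl_strictMonoOn : ∀ t t' : ℝ, 0 ≤ t → t < t' → t' ≤ 1 → pl k' y t < pl k' y t' := by
  intro t t' ht htt' ht'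
  classical
  set m := Nat.findGreatest (fun m => knots k' y m ≤ t) k' with hm_def
  have hmk : m ≤ k' := Nat.findGreatest_le k'
  have hPm : knots k' y m ≤ t :=
    Nat.findGreatest_spec (P := fun m => knots k' y m ≤ t) (Nat.zero_le k')
      (show knots k' y 0 ≤ t by rw [knots_zero]; exact ht)
  have hP1 : t < knots k' y (m+1) := by
    rcases Nat.lt_or_ge m k' with h | h
    · by_contra hc
      push_neg at hc
      have := Nat.le_findGreatest (P := fun m => knots k' y m ≤ t) (m := m+1) (n := k') (by omega) hc
      omega
    · have : m = k' := by omega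
      rw [this, knots_top k' y (by omega)]
      exact lt_of_lt_of_le htt' ht'
  have hd : 0 < knots k' y (m+1) - knots k' y m :=
    sub_pos.mpr (knot_step hy hy2 m hmk)
  apply Finset.sum_lt_sum
  · intro j hj
    rw [Finset.mem_range] at hj
    exact seg_mono hy hy2 (by omega) htt'.le
  · refine ⟨m, Finset.mem_range.mpr (by omega), ?_⟩
    unfold seg
    set u := (t - knots k' y m) / (knots k' y (m+1) - knots k' y m) with hu
    set u' := (t' - knots k' y m) / (knots k' y (m+1) - knots k' y m) with hu'
    have hu0 : 0 ≤ u := div_nonneg (by linarith) hd.le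
    have hu1 : u < 1 := by
      rw [hu, div_lt_one hd]
      linarith
    have huu' : u < u' := by
      rw [hu, hu']
      exact (div_lt_div_iff_of_pos_right hd).mpr (by linarith)
    rw [clamp_of_mem hu0 hu1.le]
    have : u < min u' 1 := lt_min huu' hu1
    calc u < min u' 1 := this
      _ ≤ max 0 (min u' 1) := le_max_right _ _

end

section Pdef
variable {n : ℕ} {k : Fin n → ℕ}

lemma continuous_knots (i : Fin n) (m : ℕ) :
    Continuous (fun x : SimpProd n k => knots (k i) (x.1 i) m) := by
  unfold knots
  split_ifs with h1 h2
  · exact continuous_const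
  · have h3 : Continuous (fun x : SimpProd n k => x.1 i) :=
      (continuous_apply i).comp continuous_subtype_val
    exact (continuous_apply _).comp h3
  · exact continuous_const

lemma continuous_G :
    Continuous (fun z : SimpProd n k × I => fun i => pl (k i) (z.1.1 i) (z.2 : ℝ)) := by
  apply continuous_pi
  intro i
  unfold pl
  apply continuous_finset_sum
  intro m hm
  rw [Finset.mem_range] at hm
  unfold seg
  apply continuous_clamp.comp
  apply Continuous.div
  · exact (continuous_subtype_val.comp continuous_snd).sub
      ((continuous_knots i m).comp continuous_fst)
  · exact ((continuous_knots i (m+1)).comp continuous_fst).sub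
      ((continuous_knots i m).comp continuous_fst)
  · intro z
    exact ne_of_gt (sub_pos.mpr (knot_step (z.1.2.1 i) (z.1.2.2 i) m (by omega)))

/-- The piecewise linear path associated to `x`. -/
noncomputable def Ppath (x : SimpProd n k) : C(I, Fin n → ℝ) :=
  ⟨fun t i => pl (k i) (x.1 i) (t : ℝ),
    (continuous_G.comp (Continuous.prodMk_right x)).congr (fun t => rfl)⟩

lemma Ppath_mem (x : SimpProd n k) : (Ppath x) ∈
    {p : C(I, Fin n → ℝ) | (∀ i : Fin n, StrictMono fun t : I => p t i) ∧
      (∀ i : Fin n, p 0 i = 0) ∧ ∀ i : Fin n, p 1 i = (k i : ℝ) + 1} := by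
  refine ⟨fun i t t' h => ?_, fun i => ?_, fun i => ?_⟩
  · exact pl_strictMonoOn (x.2.1 i) (x.2.2 i) _ _ t.2.1 h t'.2.2
  · show pl (k i) (x.1 i) ((0:I):ℝ) = 0
    have h0 : ((0:I):ℝ) = knots (k i) (x.1 i) 0 := by rw [knots_zero]; rfl
    rw [h0, pl_eval_knot (x.2.1 i) (x.2.2 i) (Nat.zero_le _)]
    simp
  · show pl (k i) (x.1 i) ((1:I):ℝ) = (k i : ℝ) + 1
    have h1 : ((1:I):ℝ) = knots (k i) (x.1 i) (k i + 1) := by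
      rw [knots_top _ _ (Nat.lt_succ_self _)]; rfl
    rw [h1, pl_eval_knot (x.2.1 i) (x.2.2 i) le_rfl]
    push_cast
    ring

/-- `P` as a continuous map. -/
lemma continuous_Ppath : Continuous (fun x : SimpProd n k => Ppath x) := by
  have := (ContinuousMap.curry (⟨_, continuous_G (n := n) (k := k)⟩ :
    C(SimpProd n k × I, Fin n → ℝ))).continuous
  exact this.congr fun x => ContinuousMap.ext fun t => rfl

/-- `P` as a continuous map. -/
noncomputable def Pmap : C(SimpProd n k, StrictPathSp n k) :=
  ⟨fun x => ⟨Ppath x, Ppath_mem x⟩, continuous_Ppath.subtype_mk _⟩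

lemma Pmap_knot (x : SimpProd n k) (i : Fin n) (l : Fin (k i)) (t : I)
    (h : (t : ℝ) = x.1 i l) : (Pmap x).1 t i = (l : ℕ) + 1 := by
  show pl (k i) (x.1 i) (t : ℝ) = (l : ℕ) + 1
  have hl : (t : ℝ) = knots (k i) (x.1 i) ((l : ℕ) + 1) := by
    rw [knots_of_pos _ _ (Nat.succ_ne_zero _) (by omega)]
    simpa using h
  rw [hl, pl_eval_knot (x.2.1 i) (x.2.2 i) (by omega)]
  push_cast
  ring

end Pdef

section Qdef
variable {n : ℕ} {k : Fin n → ℕ}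

lemma exists_preimage (p : StrictPathSp n k) (i : Fin n) (l : Fin (k i)) :
    ∃ t : I, p.1 t i = (l : ℕ) + 1 := by
  set g : ℝ → ℝ := fun r => p.1 (Set.projIcc 0 1 zero_le_one r) i with hg
  have hgc : Continuous g :=
    (continuous_apply i).comp (p.1.continuous.comp continuous_projIcc)
  have hg0 : g 0 = 0 := by
    rw [hg]
    simp only [Set.projIcc_left]
    exact p.2.2.1 i
  have hg1 : g 1 = (k i : ℝ) + 1 := by
    rw [hg]
    simp only [Set.projIcc_right]
    exact p.2.2.2 i
  have hmem : ((l : ℕ) + 1 : ℝ) ∈ Set.Icc (g 0) (g 1) := by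
    rw [hg0, hg1]
    constructor
    · positivity
    · have : (l : ℕ) < k i := l.isLt
      have : ((l : ℕ) : ℝ) ≤ (k i : ℝ) := by exact_mod_cast this.le
      linarith
  obtain ⟨r, hr, hgr⟩ := intermediate_value_Icc zero_le_one hgc.continuousOn hmem
  exact ⟨Set.projIcc 0 1 zero_le_one r, hgr⟩

/-- `Q p i l` is the preimage of `l+1` under `p_i`. -/
noncomputable def Qval (p : StrictPathSp n k) (i : Fin n) (l : Fin (k i)) : I :=
  (exists_preimage p i l).choose

lemma Qval_spec (p : StrictPathSp n k) (i : Fin n) (l : Fin (k i)) :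
    p.1 (Qval p i l) i = (l : ℕ) + 1 :=
  (exists_preimage p i l).choose_spec

lemma Qval_mem (p : StrictPathSp n k) (i : Fin n) (l : Fin (k i)) :
    ((Qval p i l : I) : ℝ) ∈ Set.Ioo (0:ℝ) 1 := by
  have h1 : p.1 0 i < p.1 (Qval p i l) i := by
    rw [Qval_spec, p.2.2.1 i]
    positivity
  have h2 : p.1 (Qval p i l) i < p.1 1 i := by
    rw [Qval_spec, p.2.2.2 i]
    have : ((l : ℕ) : ℝ) < (k i : ℝ) := by exact_mod_cast l.isLt
    linarith
  have h1' : (0 : I) < Qval p i l := (p.2.1 i).lt_iff_lt.mp h1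
  have h2' : Qval p i l < (1 : I) := (p.2.1 i).lt_iff_lt.mp h2
  exact ⟨h1', h2'⟩

lemma Qval_strictMono (p : StrictPathSp n k) (i : Fin n) :
    StrictMono (fun l : Fin (k i) => ((Qval p i l : I) : ℝ)) := by
  intro l l' h
  have : p.1 (Qval p i l) i < p.1 (Qval p i l') i := by
    rw [Qval_spec, Qval_spec]
    have : ((l : ℕ) : ℝ) < ((l' : ℕ) : ℝ) := by exact_mod_cast h
    linarith
  exact_mod_cast (p.2.1 i).lt_iff_lt.mp this

lemma continuous_Qval (i : Fin n) (l : Fin (k i)) :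
    Continuous (fun p : StrictPathSp n k => ((Qval p i l : I) : ℝ)) := by
  rw [Metric.continuous_iff]
  intro p ε hε
  set t0 := Qval p i l with ht0_def
  have ht0 := Qval_spec p i l
  obtain ⟨ht0l, ht0r⟩ := Qval_mem p i l
  have hta : max 0 ((t0:ℝ) - ε) ∈ I := by
    constructor
    · exact le_max_left _ _
    · exact max_le zero_le_one (by linarith [t0.2.2])
  have htb : min 1 ((t0:ℝ) + ε) ∈ I := by
    constructor
    · exact le_min zero_le_one (by linarith [t0.2.1])
    · exact min_le_left _ _
  set a : I := ⟨max 0 ((t0:ℝ) - ε), hta⟩ with ha_def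
  set b : I := ⟨min 1 ((t0:ℝ) + ε), htb⟩ with hb_def
  have ha : a < t0 := by
    rw [← Subtype.coe_lt_coe]
    exact max_lt ht0l (by linarith)
  have hb : t0 < b := by
    rw [← Subtype.coe_lt_coe]
    exact lt_min ht0r (by linarith)
  have hpa : p.1 a i < (l : ℕ) + 1 := by
    rw [← ht0]; exact (p.2.1 i) ha
  have hpb : ((l : ℕ) + 1 : ℝ) < p.1 b i := by
    rw [← ht0]; exact (p.2.1 i) hb
  refine ⟨min (((l : ℕ) + 1) - p.1 a i) (p.1 b i - ((l : ℕ) + 1)),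
    lt_min (by linarith) (by linarith), ?_⟩
  intro q hq
  have ht1 := Qval_spec q i l
  have key : ∀ t : I, dist (q.1 t i) (p.1 t i) < min (((l : ℕ) + 1) - p.1 a i)
      (p.1 b i - ((l : ℕ) + 1)) := by
    intro t
    calc dist (q.1 t i) (p.1 t i) ≤ dist (q.1 t) (p.1 t) := dist_le_pi_dist _ _ i
      _ ≤ dist q.1 p.1 := ContinuousMap.dist_apply_le_dist t
      _ = dist q p := (Subtype.dist_eq q p).symm
      _ < _ := hq
  have hqa : q.1 a i < (l : ℕ) + 1 := by
    have h3 := key a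
    rw [Real.dist_eq] at h3
    have h4 := abs_lt.mp (lt_of_lt_of_le h3 (min_le_left _ _))
    linarith [h4.2]
  have hqb : ((l : ℕ) + 1 : ℝ) < q.1 b i := by
    have h3 := key b
    rw [Real.dist_eq] at h3
    have h4 := abs_lt.mp (lt_of_lt_of_le h3 (min_le_right _ _))
    linarith [h4.1]
  have h1 : a < Qval q i l := by
    by_contra hc
    push_neg at hc
    have h5 : q.1 (Qval q i l) i ≤ q.1 a i := (q.2.1 i).monotone hc
    rw [ht1] at h5
    linarith
  have h2 : Qval q i l < b := by
    by_contra hc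
    push_neg at hc
    have h5 : q.1 b i ≤ q.1 (Qval q i l) i := (q.2.1 i).monotone hc
    rw [ht1] at h5
    linarith
  rw [← Subtype.coe_lt_coe] at h1 h2
  have hac : (a : ℝ) = max 0 ((Qval p i l : ℝ) - ε) := by rw [ha_def]
  have hbc : (b : ℝ) = min 1 ((Qval p i l : ℝ) + ε) := by rw [hb_def]
  rw [hac] at h1
  rw [hbc] at h2
  show dist ((Qval q i l : I) : ℝ) ((Qval p i l : I) : ℝ) < ε
  rw [Real.dist_eq, abs_lt]
  constructor
  · linarith [lt_of_le_of_lt (le_max_right 0 ((Qval p i l : ℝ) - ε)) h1]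
  · linarith [lt_of_lt_of_le h2 (min_le_right 1 ((Qval p i l : ℝ) + ε))]

/-- `Q` as a continuous map. -/
noncomputable def Qmap : C(StrictPathSp n k, SimpProd n k) :=
  ⟨fun p => ⟨fun i l => ((Qval p i l : I) : ℝ),
    fun i => Qval_strictMono p i, fun i l => Qval_mem p i l⟩,
    Continuous.subtype_mk
      (continuous_pi fun i => continuous_pi fun l => continuous_Qval i l) _⟩

lemma QP_eq_id (x : SimpProd n k) : Qmap (Pmap x) = x := by
  apply Subtype.ext
  funext i l
  show ((Qval (Pmap x) i l : I) : ℝ) = x.1 i l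
  have hmem : x.1 i l ∈ I := ⟨(x.2.2 i l).1.le, (x.2.2 i l).2.le⟩
  have h1 : (Pmap x).1 (⟨x.1 i l, hmem⟩ : I) i = (l : ℕ) + 1 :=
    Pmap_knot x i l _ rfl
  have h2 := Qval_spec (Pmap x) i l
  have := ((Pmap x).2.1 i).injective (h2.trans h1.symm)
  rw [this]

end Qdef

section Hdef
variable {n : ℕ} {k : Fin n → ℕ}

lemma combo_apply (s : ℝ) (p q : C(I, Fin n → ℝ)) (t : I) (i : Fin n) :
    ((1 - s) • p + s • q) t i = (1 - s) * (p t i) + s * (q t i) := by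
  simp [ContinuousMap.add_apply, ContinuousMap.smul_apply]

lemma combo_mem (s : I) (p q : StrictPathSp n k) :
    ((1 - (s:ℝ)) • p.1 + (s:ℝ) • q.1) ∈
    {r : C(I, Fin n → ℝ) | (∀ i : Fin n, StrictMono fun t : I => r t i) ∧
      (∀ i : Fin n, r 0 i = 0) ∧ ∀ i : Fin n, r 1 i = (k i : ℝ) + 1} := by
  refine ⟨fun i t t' h => ?_, fun i => ?_, fun i => ?_⟩
  · simp only [combo_apply]
    have hp := p.2.1 i h
    have hq := q.2.1 i h
    simp only at hp hq
    rcases eq_or_lt_of_le s.2.1 with hs | hs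
    · rw [← hs]
      simpa using hp
    · have h1 : (1 - (s:ℝ)) * (p.1 t i) ≤ (1 - (s:ℝ)) * (p.1 t' i) :=
        mul_le_mul_of_nonneg_left hp.le (by linarith [s.2.2])
      have h2 : (s:ℝ) * (q.1 t i) < (s:ℝ) * (q.1 t' i) :=
        mul_lt_mul_of_pos_left hq hs
      linarith
  · rw [combo_apply, p.2.2.1 i, q.2.2.1 i]
    ring
  · rw [combo_apply, p.2.2.2 i, q.2.2.2 i]
    ring

noncomputable def Hfun (z : I × StrictPathSp n k) : StrictPathSp n k :=
  ⟨(1 - (z.1:ℝ)) • z.2.1 + (z.1:ℝ) • (Pmap (Qmap z.2)).1, combo_mem z.1 z.2 _⟩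

lemma continuous_Hfun : Continuous (Hfun (n := n) (k := k)) := by
  apply Continuous.subtype_mk
  have hs : Continuous (fun z : I × StrictPathSp n k => (z.1 : ℝ)) :=
    continuous_subtype_val.comp continuous_fst
  have hp : Continuous (fun z : I × StrictPathSp n k => z.2.1) :=
    continuous_subtype_val.comp continuous_snd
  have hq : Continuous (fun z : I × StrictPathSp n k => (Pmap (Qmap z.2)).1) :=
    continuous_subtype_val.comp
      ((Pmap.continuous.comp Qmap.continuous).comp continuous_snd)
  exact ((continuous_const.sub hs).smul hp).add (hs.smul hq)

/-- The straight-line homotopy from the identity to `P ∘ Q`. -/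
noncomputable def Hhomotopy :
    ContinuousMap.Homotopy (ContinuousMap.id (StrictPathSp n k)) (Pmap.comp Qmap) where
  toFun := Hfun
  continuous_toFun := continuous_Hfun
  map_zero_left p := by
    apply Subtype.ext
    show (1 - ((0:I):ℝ)) • p.1 + ((0:I):ℝ) • (Pmap (Qmap p)).1 = p.1
    norm_num
  map_one_left p := by
    apply Subtype.ext
    show (1 - ((1:I):ℝ)) • p.1 + ((1:I):ℝ) • (Pmap (Qmap p)).1 = ((Pmap.comp Qmap) p).1
    norm_num

lemma Hhomotopy_apply (s : I) (p : StrictPathSp n k) (t : I) :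
    ((Hhomotopy (n := n) (k := k)) (s, p)).1 t =
      (1 - (s : ℝ)) • p.1 t + (s : ℝ) • ((Pmap (Qmap p)).1 t) := by
  show ((1 - (s:ℝ)) • p.1 + (s:ℝ) • (Pmap (Qmap p)).1) t = _
  simp [ContinuousMap.add_apply, ContinuousMap.smul_apply]

end Hdef
end Stmt4Aux

/-- There are continuous maps `P : D → X` (the piecewise-linear path construction,
characterized by the knot property `P(x)_i(x_{il}) = l + 1`) and `Q : X → D` (sending a
strictly increasing path `p` to the tuple of preimages `(p_i^{-1}(1),…,p_i^{-1}(k_i))_i`)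
such that `Q ∘ P = id` and `P ∘ Q` is homotopic to the identity via the straight-line
homotopy. -/
theorem stmt4 (hk : ∀ i, 1 ≤ k i) :
    ∃ P : C(SimpProd n k, StrictPathSp n k),
      ∃ Q : C(StrictPathSp n k, SimpProd n k),
        (∀ (x : SimpProd n k) (i : Fin n) (l : Fin (k i)) (t : I),
          (t : ℝ) = x.1 i l → (P x).1 t i = (l : ℕ) + 1) ∧
        (∀ (p : StrictPathSp n k) (i : Fin n) (l : Fin (k i)) (t : I),
          (t : ℝ) = (Q p).1 i l → p.1 t i = (l : ℕ) + 1) ∧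
        (∀ x : SimpProd n k, Q (P x) = x) ∧
        ∃ H : ContinuousMap.Homotopy (ContinuousMap.id (StrictPathSp n k)) (P.comp Q),
          ∀ (s : I) (p : StrictPathSp n k) (t : I),
            (H (s, p)).1 t =
              (1 - (s : ℝ)) • p.1 t + (s : ℝ) • ((P (Q p)).1 t) := by
  refine ⟨Stmt4Aux.Pmap, Stmt4Aux.Qmap, ?_, ?_, fun x => Stmt4Aux.QP_eq_id x,
    Stmt4Aux.Hhomotopy, ?_⟩
  · intro x i l t h
    exact Stmt4Aux.Pmap_knot x i l t h
  · intro p i l t h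
    have : t = Stmt4Aux.Qval p i l := Subtype.ext h
    rw [this]
    exact Stmt4Aux.Qval_spec p i l
  · intro s p t
    exact Stmt4Aux.Hhomotopy_apply s p t
end

section
/- The inclusion of the space of strictly increasing directed paths from 0 to k+1 avoiding the forbidden set Y into the space of nondecreasing directed paths from 0 to k+1 avoiding Y is a homotopy equivalence, where Y is the union, over F in an upward-closed family F of subsets of [n], of the sets {x ∈ ℝⁿ : x_i ∈ ℤ for all i ∈ F}, and 'avoiding' means the open interior of the path (i.e., p(t) for 0 < t < 1) lies in ℝⁿ \ Y. -/
open unitInterval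

/-- Directed (nondecreasing) paths from `0` to `k+1` whose interior avoids `Y_𝓕`. -/
def DiPath (n : ℕ) (k : Fin n → ℕ) (𝓕 : Finset (Finset (Fin n)))
    (p : C(I, Fin n → ℝ)) : Prop :=
  (∀ i : Fin n, Monotone fun t : I => p t i) ∧
    (∀ i : Fin n, p 0 i = 0) ∧ (∀ i : Fin n, p 1 i = (k i : ℝ) + 1) ∧
    ∀ t : I, 0 < (t : ℝ) → (t : ℝ) < 1 →
      ¬ ∃ F ∈ 𝓕, ∀ i ∈ F, ∃ z : ℤ, p t i = (z : ℝ)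

/-- Strictly increasing such paths. -/
def DiPathStrict (n : ℕ) (k : Fin n → ℕ) (𝓕 : Finset (Finset (Fin n)))
    (p : C(I, Fin n → ℝ)) : Prop :=
  (∀ i : Fin n, StrictMono fun t : I => p t i) ∧
    (∀ i : Fin n, p 0 i = 0) ∧ (∀ i : Fin n, p 1 i = (k i : ℝ) + 1) ∧
    ∀ t : I, 0 < (t : ℝ) → (t : ℝ) < 1 →
      ¬ ∃ F ∈ 𝓕, ∀ i ∈ F, ∃ z : ℤ, p t i = (z : ℝ)

/-!
Tilt a directed path `p` towards the diagonal path `ℓ t = t • (k + 1)`: for `0 < c ≤ 1` the path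
`(1 - c) • p + c • ℓ` is strictly increasing with the same endpoints. Near `t = 0` (resp. `t = 1`)
each of its coordinates lies strictly between `0` and `1` (resp. `kᵢ` and `kᵢ + 1`), so it cannot
meet `Y`; in between, `p` stays in the open complement of `Y`, and by compactness of `[0,1]` so do
all small tilts of all nearby paths. Hence the admissible tilt bounds form a convex set containing
a constant locally in `p`, and a partition of unity picks one, `c(p)`, continuously. The
deformation `(s, p) ↦ (1 - s c(p)) • p + s c(p) • ℓ` lands in strictly increasing paths for
`s > 0`, which makes the inclusion a homotopy equivalence.
-/

open Set Topology

section Deformation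

variable {Z : Type*} [TopologicalSpace Z] {P Q : Z → Prop}

theorem exists_homotopy_inverse_of_deformation
    (ι : C({z // Q z}, {z // P z})) (hι : ∀ z, (ι z).1 = z.1)
    (H : C(I × {z // P z}, Z)) (hH₀ : ∀ z, H (0, z) = z.1)
    (hHQ : ∀ s z, s ≠ 0 → Q (H (s, z))) :
    ∃ ρ : C({z // P z}, {z // Q z}),
      (ι.comp ρ).Homotopic (ContinuousMap.id _) ∧ (ρ.comp ι).Homotopic (ContinuousMap.id _) := by
  have hP : ∀ x, P (H x) := by
    rintro ⟨s, z⟩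
    rcases eq_or_ne s 0 with rfl | hs
    · simpa only [hH₀] using z.2
    · simpa only [hι] using (ι ⟨_, hHQ s z hs⟩).2
  have hQ : ∀ x : I × {z // Q z}, Q (H (x.1, ι x.2)) := by
    rintro ⟨s, z⟩
    rcases eq_or_ne s 0 with rfl | hs
    · simpa only [hH₀, hι] using z.2
    · exact hHQ s _ hs
  let ρ : C({z // P z}, {z // Q z}) :=
    ⟨fun z => ⟨H (1, z), hHQ 1 z one_ne_zero⟩, by fun_prop⟩
  refine ⟨ρ, .symm ⟨⟨⟨fun x => ⟨H x, hP x⟩, by fun_prop⟩, ?_, ?_⟩⟩,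
    .symm ⟨⟨⟨fun x => ⟨H (x.1, ι x.2), hQ x⟩, by fun_prop⟩, ?_, ?_⟩⟩⟩
  all_goals intro z; apply Subtype.ext
  · exact hH₀ z
  · exact (hι (ρ z)).symm
  · exact (hH₀ _).trans (hι z)
  · rfl

end Deformation

variable {n : ℕ}

section ForbiddenSet

variable {𝓕 : Finset (Finset (Fin n))}

def forbiddenSet (𝓕 : Finset (Finset (Fin n))) : Set (Fin n → ℝ) :=
  {x | ∃ F ∈ 𝓕, ∀ i ∈ F, ∃ z : ℤ, x i = z}

theorem isClosed_forbiddenSet (𝓕 : Finset (Finset (Fin n))) : IsClosed (forbiddenSet 𝓕) := by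
  have : forbiddenSet 𝓕 =
      ⋃ F ∈ (𝓕 : Set (Finset (Fin n))), ⋂ i ∈ F, (fun x => x i) ⁻¹' range ((↑) : ℤ → ℝ) := by
    ext x
    simp [forbiddenSet, eq_comm]
  rw [this]
  exact 𝓕.finite_toSet.isClosed_biUnion fun F _ => isClosed_biInter fun i _ =>
    Int.isClosedEmbedding_coe_real.isClosed_range.preimage (continuous_apply i)

theorem notMem_forbiddenSet_of_forall_lt_lt (h𝓕 : ∀ F ∈ 𝓕, F.Nonempty) {x : Fin n → ℝ}
    (m : Fin n → ℤ) (hx : ∀ i, (m i : ℝ) < x i ∧ x i < m i + 1) : x ∉ forbiddenSet 𝓕 := by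
  rintro ⟨F, hF, hint⟩
  obtain ⟨i, hi⟩ := h𝓕 F hF
  obtain ⟨z, hz⟩ := hint i hi
  obtain ⟨hlo, hhi⟩ := hx i
  rw [hz] at hlo hhi
  norm_cast at hlo hhi
  omega

end ForbiddenSet

section Tilt

variable {k : Fin n → ℕ}

def diagonalPath (k : Fin n → ℕ) : C(I, Fin n → ℝ) :=
  ⟨fun t i => t * (k i + 1), by fun_prop⟩

noncomputable def tilt (k : Fin n → ℕ) (p : C(I, Fin n → ℝ)) (c : ℝ) : C(I, Fin n → ℝ) :=
  AffineMap.lineMap p (diagonalPath k) c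

theorem tilt_apply (p : C(I, Fin n → ℝ)) (c : ℝ) (t : I) (i : Fin n) :
    tilt k p c t i = p t i + c * (t * (k i + 1) - p t i) := by
  simp only [tilt, diagonalPath, AffineMap.lineMap_apply, vsub_eq_sub, vadd_eq_add,
    ContinuousMap.add_apply, ContinuousMap.coe_smul, ContinuousMap.coe_sub, ContinuousMap.coe_mk,
    Pi.smul_apply, Pi.sub_apply, Pi.add_apply, smul_eq_mul]
  ring

@[simp]
theorem tilt_zero (p : C(I, Fin n → ℝ)) : tilt k p 0 = p :=
  AffineMap.lineMap_apply_zero _ _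

@[fun_prop]
theorem Continuous.tilt {X : Type*} [TopologicalSpace X] {f : X → C(I, Fin n → ℝ)} {c : X → ℝ}
    (hf : Continuous f) (hc : Continuous c) : Continuous fun x => _root_.tilt k (f x) (c x) :=
  hf.lineMap continuous_const hc

end Tilt

section TiltOfDiPath

variable {k : Fin n → ℕ} {𝓕 : Finset (Finset (Fin n))} {p : C(I, Fin n → ℝ)} {c : ℝ}

theorem DiPath.apply_mem_Icc (hp : DiPath n k 𝓕 p) (t : I) (i : Fin n) :
    p t i ∈ Icc 0 ((k i : ℝ) + 1) := by
  obtain ⟨hmono, h0, h1, -⟩ := hp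
  exact ⟨h0 i ▸ hmono i (nonneg' (t := t)), h1 i ▸ hmono i (le_one' (t := t))⟩

theorem DiPath.tilt_apply_pos (hp : DiPath n k 𝓕 p) (hc : c ∈ Ioc 0 1) {t : I}
    (ht : 0 < (t : ℝ)) (i : Fin n) : 0 < tilt k p c t i := by
  obtain ⟨hp0, -⟩ := hp.apply_mem_Icc t i
  rw [tilt_apply]
  nlinarith [hc.1, hc.2, mul_pos hc.1 ht]

theorem DiPath.tilt_apply_lt (hp : DiPath n k 𝓕 p) (hc : c ∈ Ioc 0 1) {t : I}
    (ht : (t : ℝ) < 1) (i : Fin n) : tilt k p c t i < k i + 1 := by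
  obtain ⟨-, hp1⟩ := hp.apply_mem_Icc t i
  have hk : (0 : ℝ) < k i + 1 := by positivity
  rw [tilt_apply]
  nlinarith [hc.1, hc.2, mul_pos hc.1 (mul_pos (sub_pos.2 ht) hk)]

theorem DiPath.diPathStrict_tilt (hp : DiPath n k 𝓕 p) (hc : c ∈ Ioc 0 1)
    (havoid : ∀ t : I, 0 < (t : ℝ) → (t : ℝ) < 1 → tilt k p c t ∉ forbiddenSet 𝓕) :
    DiPathStrict n k 𝓕 (tilt k p c) := by
  obtain ⟨hmono, h0, h1, -⟩ := hp
  refine ⟨fun i t₁ t₂ ht => ?_, fun i => by simp [tilt_apply, h0],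
    fun i => by simp [tilt_apply, h1], havoid⟩
  have hk : (0 : ℝ) < k i + 1 := by positivity
  have hlt : (t₁ : ℝ) < t₂ := ht
  simp only [tilt_apply]
  nlinarith [hmono i ht.le, hc.1, hc.2, mul_pos hc.1 (mul_pos (sub_pos.2 hlt) hk)]

theorem DiPath.tilt_apply_notMem_forbiddenSet (h𝓕 : ∀ F ∈ 𝓕, F.Nonempty)
    (hp : DiPath n k 𝓕 p) (hc : c ∈ Ioc 0 1) {t : I} (ht₀ : 0 < (t : ℝ)) (ht₁ : (t : ℝ) < 1)
    (h : tilt k p c t ∈ (forbiddenSet 𝓕)ᶜ ∪ {x | ∀ i, x i < 1} ∪ {x | ∀ i, (k i : ℝ) < x i}) :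
    tilt k p c t ∉ forbiddenSet 𝓕 := by
  rcases h with (h | h) | h
  · exact h
  · refine notMem_forbiddenSet_of_forall_lt_lt h𝓕 0 fun i => ?_
    simpa using ⟨hp.tilt_apply_pos hc ht₀ i, h i⟩
  · refine notMem_forbiddenSet_of_forall_lt_lt h𝓕 (fun i => k i) fun i => ?_
    simpa using ⟨h i, hp.tilt_apply_lt hc ht₁ i⟩

def tiltBounds (k : Fin n → ℕ) (𝓕 : Finset (Finset (Fin n))) (p : C(I, Fin n → ℝ)) : Set ℝ :=
  {c | c ∈ Ioc 0 1 ∧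
    ∀ c' ∈ Ioc 0 c, ∀ t : I, 0 < (t : ℝ) → (t : ℝ) < 1 → tilt k p c' t ∉ forbiddenSet 𝓕}

theorem convex_tiltBounds : Convex ℝ (tiltBounds k 𝓕 p) := by
  refine OrdConnected.convex ⟨fun a ha b hb x hx => ?_⟩
  exact ⟨⟨ha.1.1.trans_le hx.1, hx.2.trans hb.1.2⟩,
    fun c' hc' => hb.2 c' ⟨hc'.1, hc'.2.trans hx.2⟩⟩

theorem DiPath.exists_eventually_mem_tiltBounds (h𝓕 : ∀ F ∈ 𝓕, F.Nonempty)
    {p₀ : C(I, Fin n → ℝ)} (hp₀ : DiPath n k 𝓕 p₀) :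
    ∃ c, ∀ᶠ p in 𝓝 p₀, DiPath n k 𝓕 p → c ∈ tiltBounds k 𝓕 p := by
  -- `W` contains the whole path `p₀`, and a tilt of a directed path meets `Y` only outside `W`.
  set W : Set (Fin n → ℝ) :=
    (forbiddenSet 𝓕)ᶜ ∪ {x | ∀ i, x i < 1} ∪ {x | ∀ i, (k i : ℝ) < x i}
  have hW : IsOpen W := by
    refine ((isClosed_forbiddenSet 𝓕).isOpen_compl.union ?_).union ?_ <;>
      simp only [ofPred_forall] <;>
      exact isOpen_iInter_of_finite fun i => isOpen_lt (by fun_prop) (by fun_prop)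
  have hp₀W : MapsTo (tilt k p₀ 0) univ W := by
    intro t _
    obtain ⟨-, h0, h1, havoid⟩ := hp₀
    rw [tilt_zero]
    rcases eq_or_ne t 0 with rfl | ht₀
    · exact .inl (.inr fun i => by simp [h0])
    rcases eq_or_ne t 1 with rfl | ht₁
    · exact .inr fun i => by simp [h1]
    exact .inl (.inl (havoid t (unitInterval.pos_iff_ne_zero.2 ht₀)
      (unitInterval.lt_one_iff_ne_one.2 ht₁)))
  have hopen : IsOpen {q : C(I, Fin n → ℝ) × ℝ | MapsTo (tilt k q.1 q.2) univ W} :=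
    (ContinuousMap.isOpen_setOfPred_mapsTo isCompact_univ hW).preimage
      (continuous_fst.tilt continuous_snd)
  have hnhds : ∀ᶠ q in 𝓝 p₀ ×ˢ 𝓝 (0 : ℝ), MapsTo (tilt k q.1 q.2) univ W := by
    rw [← nhds_prod_eq]
    exact hopen.mem_nhds hp₀W
  obtain ⟨U, hU, C, hC, hUC⟩ := Filter.eventually_prod_iff.1 hnhds
  obtain ⟨u, hu, huC⟩ := exists_Ico_subset_of_mem_nhds hC ⟨1, one_pos⟩
  refine ⟨min (u / 2) 1, hU.mono fun p hpU hp => ⟨⟨by positivity, min_le_right _ _⟩, ?_⟩⟩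
  intro c hc t ht₀ ht₁
  have hcu : c < u := hc.2.trans_lt ((min_le_left _ _).trans_lt (by linarith))
  have hc1 : c ∈ Ioc 0 1 := ⟨hc.1, hc.2.trans (min_le_right _ _)⟩
  exact hp.tilt_apply_notMem_forbiddenSet h𝓕 hc1 ht₀ ht₁
    (hUC hpU (huC ⟨hc.1.le, hcu⟩) (mem_univ t))

end TiltOfDiPath

theorem stmt5_general (n : ℕ) (k : Fin n → ℕ)
    (𝓕 : Finset (Finset (Fin n)))
    (hcard : ∀ F ∈ 𝓕, 2 ≤ F.card)
    (ι : C({p : C(I, Fin n → ℝ) // DiPathStrict n k 𝓕 p},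
      {p : C(I, Fin n → ℝ) // DiPath n k 𝓕 p}))
    (hι : ∀ p, (ι p).1 = p.1) :
    ∃ ρ : C({p : C(I, Fin n → ℝ) // DiPath n k 𝓕 p},
        {p : C(I, Fin n → ℝ) // DiPathStrict n k 𝓕 p}),
      (ι.comp ρ).Homotopic (ContinuousMap.id _) ∧
        (ρ.comp ι).Homotopic (ContinuousMap.id _) := by
  have h𝓕 : ∀ F ∈ 𝓕, F.Nonempty := fun F hF => Finset.card_pos.1 (by linarith [hcard F hF])
  have hloc : ∀ p : {p : C(I, Fin n → ℝ) // DiPath n k 𝓕 p},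
      ∃ c, ∀ᶠ q in 𝓝 p, c ∈ tiltBounds k 𝓕 q.1 := fun p =>
    (p.2.exists_eventually_mem_tiltBounds h𝓕).imp fun _ hc =>
      (continuous_subtype_val.continuousAt.eventually hc).mono fun q hq => hq q.2
  obtain ⟨g, hg⟩ :=
    exists_continuous_forall_mem_convex_of_local_const (fun _ => convex_tiltBounds) hloc
  let H : C(I × {p : C(I, Fin n → ℝ) // DiPath n k 𝓕 p}, C(I, Fin n → ℝ)) :=
    ⟨fun x => tilt k x.2.1 (x.1 * g x.2), by fun_prop⟩
  refine exists_homotopy_inverse_of_deformation ι hι H (fun p => by simp [H]) fun s p hs => ?_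
  have hs₀ : (0 : ℝ) < s := unitInterval.pos_iff_ne_zero.2 hs
  have hsg : (s : ℝ) * g p ≤ g p := mul_le_of_le_one_left (hg p).1.1.le s.2.2
  exact p.2.diPathStrict_tilt ⟨mul_pos hs₀ (hg p).1.1, hsg.trans (hg p).1.2⟩
    ((hg p).2 _ ⟨mul_pos hs₀ (hg p).1.1, hsg⟩)

/-- Lemma 2.3 of Meshulam–Raussen: the inclusion of the space of strictly increasing
directed paths from `0` to `k+1` avoiding `Y_𝓕` into the space of nondecreasing such
paths is a homotopy equivalence (both spaces carrying the compact-open topology, as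
subspaces of `C([0,1], ℝⁿ)`). -/
theorem stmt5 (n : ℕ) (k : Fin n → ℕ) (hk : ∀ i, 1 ≤ k i)
    (𝓕 : Finset (Finset (Fin n)))
    (hup : ∀ F ∈ 𝓕, ∀ F' : Finset (Fin n), F ⊆ F' → F' ∈ 𝓕)
    (hcard : ∀ F ∈ 𝓕, 2 ≤ F.card)
    (ι : C({p : C(I, Fin n → ℝ) // DiPathStrict n k 𝓕 p},
      {p : C(I, Fin n → ℝ) // DiPath n k 𝓕 p}))
    (hι : ∀ p, (ι p).1 = p.1) :
    ∃ ρ : C({p : C(I, Fin n → ℝ) // DiPath n k 𝓕 p},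
        {p : C(I, Fin n → ℝ) // DiPathStrict n k 𝓕 p}),
      (ι.comp ρ).Homotopic (ContinuousMap.id _) ∧
        (ρ.comp ι).Homotopic (ContinuousMap.id _) :=
  stmt5_general n k 𝓕 hcard ι hι
end

section
/- Let R be an acyclic separated family of partial sequences. Then the linear subspace V_R = {(x_{i1},...,x_{ik_i})_{i=1}^n ∈ ∏_i ℝ^{k_i} : x_{i,j(i)} = x_{i',j(i')} for all (F,j) ∈ R and i,i' ∈ F} has codimension Σ_{(F,j) ∈ R} (|F| - 1) in ℝ^N, where N = k_1 + ... + k_n. -/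
/-- A partial sequence on `[n]`: a pair `(F, j)`, normalized so that `j i = 0` off `F`. -/
abbrev PartSeq (n : ℕ) := Finset (Fin n) × (Fin n → ℕ)

/-- `(F,j)` is valid for capacities `k`: `j i ∈ {1,…,k i}` for `i ∈ F`, `j i = 0` off `F`. -/
def ValidPS {n : ℕ} (k : Fin n → ℕ) (p : PartSeq n) : Prop :=
  (∀ i ∈ p.1, p.2 i ∈ Finset.Icc 1 (k i)) ∧ ∀ i ∉ p.1, p.2 i = 0

/-- Separated: distinct members disagree in every common coordinate. -/
def SeparatedFam {n : ℕ} (R : Finset (PartSeq n)) : Prop :=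
  ∀ p ∈ R, ∀ q ∈ R, p ≠ q → ∀ i ∈ p.1 ∩ q.1, p.2 i ≠ q.2 i

/-- The edge relation of the digraph `K_R`. -/
def KEdge {n : ℕ} (p q : PartSeq n) : Prop :=
  p ≠ q ∧ (p.1 ∩ q.1).Nonempty ∧ ∀ i ∈ p.1 ∩ q.1, p.2 i < q.2 i

/-- Acyclic: separated and `K_R` has no directed cycle. -/
def AcyclicFam {n : ℕ} (R : Finset (PartSeq n)) : Prop :=
  SeparatedFam R ∧
    ∀ p ∈ R, ¬ Relation.TransGen (fun a b => a ∈ R ∧ b ∈ R ∧ KEdge a b) p p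

namespace Stmt6Aux

variable {n : ℕ} (k : Fin n → ℕ) (R : Finset (PartSeq n))

/-- The block of coordinates used by the partial sequence `p`. -/
def S (p : PartSeq n) : Finset (Σ i : Fin n, Fin (k i)) :=
  Finset.univ.filter (fun idx => idx.1 ∈ p.1 ∧ (idx.2 : ℕ) + 1 = p.2 idx.1)

lemma mem_S {p : PartSeq n} {idx : Σ i : Fin n, Fin (k i)} :
    idx ∈ S k p ↔ idx.1 ∈ p.1 ∧ (idx.2 : ℕ) + 1 = p.2 idx.1 := by
  simp [S]

/-- Blocks of distinct members of a separated family are disjoint. -/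
lemma S_unique (hsep : SeparatedFam R) {p q : PartSeq n} (hp : p ∈ R) (hq : q ∈ R)
    {idx : Σ i : Fin n, Fin (k i)} (hip : idx ∈ S k p) (hiq : idx ∈ S k q) : p = q := by
  by_contra hne
  have h1 := (mem_S k).mp hip
  have h2 := (mem_S k).mp hiq
  exact hsep p hp q hq hne idx.1 (Finset.mem_inter.mpr ⟨h1.1, h2.1⟩) (by omega)

/-- A chosen representative of the block of `p` (as an `Option`). -/
noncomputable def rep (p : PartSeq n) : Option (Σ i : Fin n, Fin (k i)) :=
  if h : (S k p).Nonempty then some h.choose else none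

lemma rep_spec {p : PartSeq n} (h : (S k p).Nonempty) :
    ∃ r, rep k p = some r ∧ r ∈ S k p := by
  refine ⟨h.choose, ?_, h.choose_spec⟩
  rw [rep, dif_pos h]

/-- Collapse map: send each coordinate in a block to the block's representative. -/
noncomputable def c (idx : Σ i : Fin n, Fin (k i)) : Σ i : Fin n, Fin (k i) :=
  if h : ∃ p ∈ R, idx ∈ S k p then (rep k h.choose).getD idx else idx

lemma c_spec (hsep : SeparatedFam R) {p : PartSeq n} (hp : p ∈ R)
    {idx : Σ i : Fin n, Fin (k i)} (h : idx ∈ S k p) :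
    ∃ r, rep k p = some r ∧ c k R idx = r ∧ r ∈ S k p := by
  obtain ⟨r, hr, hrS⟩ := rep_spec k (p := p) ⟨idx, h⟩
  have hex : ∃ q ∈ R, idx ∈ S k q := ⟨p, hp, h⟩
  have heq : hex.choose = p :=
    S_unique k R hsep hex.choose_spec.1 hp hex.choose_spec.2 h
  refine ⟨r, hr, ?_, hrS⟩
  rw [c, dif_pos hex, heq, hr, Option.getD_some]

lemma c_of_notMem {idx : Σ i : Fin n, Fin (k i)} (h : ¬ ∃ p ∈ R, idx ∈ S k p) :
    c k R idx = idx := by rw [c, dif_neg h]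

end Stmt6Aux

/-- For an acyclic separated family `R`, the subspace
`V_R = {x ∈ ℝ^N : x_{i,j(i)} = x_{i',j(i')} for all (F,j) ∈ R and i,i' ∈ F}`
has codimension `Σ_{(F,j) ∈ R} (|F| - 1)` in `ℝ^N`, `N = k_1 + ⋯ + k_n`. -/
theorem stmt6 (n : ℕ) (k : Fin n → ℕ) (hk : ∀ i, 1 ≤ k i)
    (R : Finset (PartSeq n)) (hval : ∀ p ∈ R, ValidPS k p) (hac : AcyclicFam R)
    (V : Submodule ℝ ((Σ i : Fin n, Fin (k i)) → ℝ))
    (hV : ∀ x : (Σ i : Fin n, Fin (k i)) → ℝ,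
      x ∈ V ↔ ∀ p ∈ R, ∀ i ∈ p.1, ∀ i' ∈ p.1,
        ∀ (a : Fin (k i)) (b : Fin (k i')),
          (a : ℕ) + 1 = p.2 i → (b : ℕ) + 1 = p.2 i' →
            x ⟨i, a⟩ = x ⟨i', b⟩) :
    Module.finrank ℝ (((Σ i : Fin n, Fin (k i)) → ℝ) ⧸ V) =
      ∑ p ∈ R, (p.1.card - 1) := by
  classical
  obtain ⟨hsep, -⟩ := hac
  -- `cc` is constant on each block
  have hconst : ∀ p ∈ R, ∀ idx ∈ Stmt6Aux.S k p, ∀ idx' ∈ Stmt6Aux.S k p,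
      Stmt6Aux.c k R idx = Stmt6Aux.c k R idx' := by
    intro p hp idx h idx' h'
    obtain ⟨r, hr, hc, -⟩ := Stmt6Aux.c_spec k R hsep hp h
    obtain ⟨r', hr', hc', -⟩ := Stmt6Aux.c_spec k R hsep hp h'
    rw [hc, hc']
    rw [hr] at hr'
    exact Option.some.inj hr'
  have hmemS : ∀ p ∈ R, ∀ idx ∈ Stmt6Aux.S k p, Stmt6Aux.c k R idx ∈ Stmt6Aux.S k p := by
    intro p hp idx h
    obtain ⟨r, -, hc, hrS⟩ := Stmt6Aux.c_spec k R hsep hp h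
    rwa [hc]
  have hidem : ∀ idx, Stmt6Aux.c k R (Stmt6Aux.c k R idx) = Stmt6Aux.c k R idx := by
    intro idx
    by_cases hex : ∃ p ∈ R, idx ∈ Stmt6Aux.S k p
    · obtain ⟨p, hp, h⟩ := hex
      exact hconst p hp _ (hmemS p hp idx h) idx h
    · rw [Stmt6Aux.c_of_notMem k R hex, Stmt6Aux.c_of_notMem k R hex]
  -- reformulate membership in V
  have hVmem : ∀ x : (Σ i : Fin n, Fin (k i)) → ℝ, (x ∈ V ↔
      ∀ p ∈ R, ∀ idx ∈ Stmt6Aux.S k p, ∀ idx' ∈ Stmt6Aux.S k p, x idx = x idx') := by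
    intro x
    rw [hV]
    constructor
    · intro hx p hp idx h idx' h'
      obtain ⟨h1, h2⟩ := (Stmt6Aux.mem_S k).mp h
      obtain ⟨h1', h2'⟩ := (Stmt6Aux.mem_S k).mp h'
      have := hx p hp idx.1 h1 idx'.1 h1' idx.2 idx'.2 h2 h2'
      simpa using this
    · intro hx p hp i hi i' hi' a b ha hb
      exact hx p hp ⟨i, a⟩ ((Stmt6Aux.mem_S k).mpr ⟨hi, ha⟩)
        ⟨i', b⟩ ((Stmt6Aux.mem_S k).mpr ⟨hi', hb⟩)
  -- the fixed-point set of the collapse map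
  set T : Finset (Σ i : Fin n, Fin (k i)) :=
    Finset.univ.filter (fun idx => Stmt6Aux.c k R idx = idx) with hT
  have hcT : ∀ idx, Stmt6Aux.c k R idx ∈ T := fun idx =>
    Finset.mem_filter.mpr ⟨Finset.mem_univ _, hidem idx⟩
  have hxV : ∀ y : {a // a ∈ T} → ℝ,
      (fun idx => y ⟨Stmt6Aux.c k R idx, hcT idx⟩) ∈ V := by
    intro y
    rw [hVmem]
    intro p hp idx h idx' h'
    exact congrArg y (Subtype.ext (hconst p hp idx h idx' h'))
  -- V is isomorphic to functions on T
  let e : V ≃ₗ[ℝ] ({a // a ∈ T} → ℝ) :=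
  { toFun := fun x t => x.1 t.1
    map_add' := fun x y => rfl
    map_smul' := fun c x => rfl
    invFun := fun y => ⟨fun idx => y ⟨Stmt6Aux.c k R idx, hcT idx⟩, hxV y⟩
    left_inv := by
      intro x
      apply Subtype.ext
      funext idx
      show x.1 (Stmt6Aux.c k R idx) = x.1 idx
      by_cases hex : ∃ p ∈ R, idx ∈ Stmt6Aux.S k p
      · obtain ⟨p, hp, h⟩ := hex
        exact (hVmem x.1).mp x.2 p hp _ (hmemS p hp idx h) idx h
      · rw [Stmt6Aux.c_of_notMem k R hex]
    right_inv := by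
      intro y
      funext t
      exact congrArg y (Subtype.ext (Finset.mem_filter.mp t.2).2) }
  have hrankV : Module.finrank ℝ V = T.card := by
    rw [e.finrank_eq, Module.finrank_fintype_fun_eq_card, Fintype.card_coe]
  have htot := Submodule.finrank_quotient_add_finrank V
  have htotal : Module.finrank ℝ ((Σ i : Fin n, Fin (k i)) → ℝ) =
      Fintype.card (Σ i : Fin n, Fin (k i)) :=
    Module.finrank_fintype_fun_eq_card ℝ
  -- counting: each block has the size of its index set
  have hcardS : ∀ p ∈ R, (Stmt6Aux.S k p).card = p.1.card := by
    intro p hp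
    apply Finset.card_bij (fun idx _ => idx.1)
    · intro idx hidx
      exact ((Stmt6Aux.mem_S k).mp hidx).1
    · intro a ha b hb hab
      obtain ⟨h1, h2⟩ := (Stmt6Aux.mem_S k).mp ha
      obtain ⟨h1', h2'⟩ := (Stmt6Aux.mem_S k).mp hb
      obtain ⟨i, x⟩ := a
      obtain ⟨i', x'⟩ := b
      cases hab
      simp only at h2 h2' ⊢
      congr 1
      exact Fin.ext (by omega)
    · intro i hi
      have hki := (hval p hp).1 i hi
      rw [Finset.mem_Icc] at hki
      refine ⟨⟨i, ⟨p.2 i - 1, by omega⟩⟩, (Stmt6Aux.mem_S k).mpr ⟨hi, by simp; omega⟩, rfl⟩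
  -- within each nonempty block exactly one fixed point
  have hSD : ∀ p ∈ R,
      ((Stmt6Aux.S k p).filter (fun idx => ¬ Stmt6Aux.c k R idx = idx)).card
        = p.1.card - 1 := by
    intro p hp
    rcases Finset.eq_empty_or_nonempty (Stmt6Aux.S k p) with hS | hS
    · have h1 : p.1 = ∅ := by
        by_contra hne
        obtain ⟨i, hi⟩ := Finset.nonempty_iff_ne_empty.mpr hne
        have hki := (hval p hp).1 i hi
        rw [Finset.mem_Icc] at hki
        have : (⟨i, ⟨p.2 i - 1, by omega⟩⟩ : Σ i : Fin n, Fin (k i)) ∈ Stmt6Aux.S k p :=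
          (Stmt6Aux.mem_S k).mpr ⟨hi, by simp; omega⟩
        rw [hS] at this
        exact absurd this (Finset.notMem_empty _)
      simp [hS, h1]
    · obtain ⟨idx0, hidx0⟩ := hS
      obtain ⟨r, hr, hc0, hrS⟩ := Stmt6Aux.c_spec k R hsep hp hidx0
      have hfix : (Stmt6Aux.S k p).filter (fun idx => Stmt6Aux.c k R idx = idx) = {r} := by
        ext idx
        simp only [Finset.mem_filter, Finset.mem_singleton]
        constructor
        · rintro ⟨hmem, hfx⟩
          obtain ⟨r', hr', hc', -⟩ := Stmt6Aux.c_spec k R hsep hp hmem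
          rw [hr] at hr'
          rw [← hfx, hc']
          exact (Option.some.inj hr').symm
        · rintro rfl
          refine ⟨hrS, ?_⟩
          obtain ⟨r', hr', hc', -⟩ := Stmt6Aux.c_spec k R hsep hp hrS
          rw [hr] at hr'
          rw [hc']
          exact (Option.some.inj hr').symm
      have hsplit := Finset.card_filter_add_card_filter_not
        (s := Stmt6Aux.S k p) (fun idx => Stmt6Aux.c k R idx = idx)
      rw [hfix, Finset.card_singleton, hcardS p hp] at hsplit
      omega
  -- the non-fixed points are the disjoint union of the punctured blocks
  have hD : Finset.univ.filter (fun idx => ¬ Stmt6Aux.c k R idx = idx)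
      = R.biUnion (fun p => (Stmt6Aux.S k p).filter
          (fun idx => ¬ Stmt6Aux.c k R idx = idx)) := by
    ext idx
    simp only [Finset.mem_filter, Finset.mem_univ, true_and, Finset.mem_biUnion]
    constructor
    · intro hne
      by_cases hex : ∃ p ∈ R, idx ∈ Stmt6Aux.S k p
      · obtain ⟨p, hp, h⟩ := hex
        exact ⟨p, hp, h, hne⟩
      · exact absurd (Stmt6Aux.c_of_notMem k R hex) hne
    · rintro ⟨p, hp, -, hne⟩
      exact hne
  have hdisj : ∀ p ∈ R, ∀ q ∈ R, p ≠ q →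
      Disjoint ((Stmt6Aux.S k p).filter (fun idx => ¬ Stmt6Aux.c k R idx = idx))
        ((Stmt6Aux.S k q).filter (fun idx => ¬ Stmt6Aux.c k R idx = idx)) := by
    intro p hp q hq hne
    rw [Finset.disjoint_left]
    intro idx hidxp hidxq
    exact hne (Stmt6Aux.S_unique k R hsep hp hq
      (Finset.mem_filter.mp hidxp).1 (Finset.mem_filter.mp hidxq).1)
  have hDcard : (Finset.univ.filter (fun idx => ¬ Stmt6Aux.c k R idx = idx)).card
      = ∑ p ∈ R, (p.1.card - 1) := by
    rw [hD, Finset.card_biUnion hdisj]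
    exact Finset.sum_congr rfl hSD
  have hsplitT := Finset.card_filter_add_card_filter_not
    (s := (Finset.univ : Finset (Σ i : Fin n, Fin (k i))))
    (fun idx => Stmt6Aux.c k R idx = idx)
  rw [← Finset.card_univ] at htotal
  rw [← hT] at hsplitT
  omega
end
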